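/- arXiv:0707.3271 — 8 statements merged into one kernel-verified Lean document; each statement's English description precedes it below -/
import Mathlib

section
/- Let S and T be characteristic sets. Define the arithmetic-mean closure S⁻ := {ξ ∈ c₀* : ξ ≺ η for some η ∈ S} and the sum S + T := {ξ ∈ c₀* : there exist σ ∈ S and τ ∈ T with ξ_n ≤ σ_n + τ_n for all n}. Then (S + T)⁻ = S⁻ + T⁻. In particular, if S = S⁻ and T = T⁻ (S and T are am-closed), then S + T is am-closed. -/
/-!
Sequences are indexed by `ℕ` starting at 0, so that entry `n` corresponds to the
`(n+1)`-st term of a sequence indexed by `{1,2,...}`.  With this convention the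
2-fold ampliation `(D₂ξ)_m = ξ_{⌈m/2⌉}` becomes `n ↦ ξ (n / 2)` (natural division).
-/

/-- `ξ ∈ c₀*`: nonnegative, nonincreasing, converging to 0. -/
def IsC0Star (ξ : ℕ → ℝ) : Prop :=
  (∀ n, 0 ≤ ξ n) ∧ (∀ n, ξ (n + 1) ≤ ξ n) ∧ Filter.Tendsto ξ Filter.atTop (nhds 0)

/-- `ξ ≺ η`: majorization, `∑_{j=1}^n ξ_j ≤ ∑_{j=1}^n η_j` for every `n`. -/
def Maj (ξ η : ℕ → ℝ) : Prop :=
  ∀ n : ℕ, ∑ j ∈ Finset.range n, ξ j ≤ ∑ j ∈ Finset.range n, η j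

/-- A characteristic set: a subset of `c₀*` that is hereditary, additive,
and invariant under the 2-fold ampliation. -/
def IsCharSet (S : Set (ℕ → ℝ)) : Prop :=
  (∀ ξ ∈ S, IsC0Star ξ) ∧
  (∀ η ∈ S, ∀ ξ : ℕ → ℝ, IsC0Star ξ → (∀ n, ξ n ≤ η n) → ξ ∈ S) ∧
  (∀ ξ ∈ S, ∀ η ∈ S, (fun n => ξ n + η n) ∈ S) ∧
  (∀ ξ ∈ S, (fun n => ξ (n / 2)) ∈ S)

/-- The arithmetic-mean closure `S⁻ = {ξ ∈ c₀* : ξ ≺ η for some η ∈ S}`. -/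
def amClosure (S : Set (ℕ → ℝ)) : Set (ℕ → ℝ) :=
  {ξ | IsC0Star ξ ∧ ∃ η ∈ S, Maj ξ η}

/-- The sum `S + T = {ξ ∈ c₀* : ξ ≤ σ + τ pointwise for some σ ∈ S, τ ∈ T}`. -/
def setSum (S T : Set (ℕ → ℝ)) : Set (ℕ → ℝ) :=
  {ξ | IsC0Star ξ ∧ ∃ σ ∈ S, ∃ τ ∈ T, ∀ n, ξ n ≤ σ n + τ n}

/-!
The inclusion `S⁻ + T⁻ ⊆ (S + T)⁻` is immediate; the content is that `ξ ≺ σ + τ` splits as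
`ξ = α + β` with `α ≺ σ`, `β ≺ τ` in `c₀*`. Pass to the partial sums `F, G, H` of `ξ, σ, τ`, which
are concave, and let `U` be the least concave majorant of `max (F - H) 0`; take `α = ΔU` and
`β = Δ(F - U)`. Then `U ≤ G` because `G` is a concave majorant, and `F - U ≤ H` because
`U ≥ F - H`. The function `F - U` is still concave: with `M = max (F - H) 0`, `F - M = min H F`
is concave, i.e. `Δ²M ≥ Δ²F`, and since `Δ²F ≤ 0` this inequality survives passing from `M` to
its least concave majorant.
Concave nonnegative sequences are nondecreasing, so `α, β ≥ 0`, and they tend to `0` because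
they are bounded by Cesàro means of `σ` and `τ`.
-/

open Finset Filter Topology

def IsConcaveSeq (f : ℕ → ℝ) : Prop :=
  Antitone fun n => f (n + 1) - f n

theorem isConcaveSeq_iff {f : ℕ → ℝ} :
    IsConcaveSeq f ↔ ∀ n, f n + f (n + 2) ≤ 2 * f (n + 1) := by
  refine ⟨fun h n => ?_, fun h => antitone_nat_of_succ_le fun n => ?_⟩
  · have := h (Nat.le_succ n)
    simp only at this
    linarith
  · linarith [h n]

theorem isConcaveSeq_sum_range {ξ : ℕ → ℝ} (hξ : Antitone ξ) :
    IsConcaveSeq fun n => ∑ j ∈ range n, ξ j := by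
  simpa only [IsConcaveSeq, sum_range_succ, add_sub_cancel_left] using hξ

namespace IsConcaveSeq

variable {f g : ℕ → ℝ}

theorem min (hf : IsConcaveSeq f) (hg : IsConcaveSeq g) :
    IsConcaveSeq fun n => min (f n) (g n) := by
  rw [isConcaveSeq_iff] at *
  intro n
  rcases min_cases (f (n + 1)) (g (n + 1)) with ⟨h, -⟩ | ⟨h, -⟩ <;> rw [h]
  · linarith [hf n, min_le_left (f n) (g n), min_le_left (f (n + 2)) (g (n + 2))]
  · linarith [hg n, min_le_right (f n) (g n), min_le_right (f (n + 2)) (g (n + 2))]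

theorem le_tangent (hf : IsConcaveSeq f) (n k : ℕ) :
    f k ≤ f n + (f (n + 1) - f n) * ((k : ℝ) - n) := by
  rcases le_total n k with hnk | hkn
  · obtain ⟨m, rfl⟩ := Nat.exists_eq_add_of_le hnk
    induction m with
    | zero => simp
    | succ m ih =>
      have hslope : f (n + m + 1) - f (n + m) ≤ f (n + 1) - f n := hf (Nat.le_add_right n m)
      push_cast at ih ⊢
      rw [← add_assoc]
      linarith [ih (Nat.le_add_right n m)]
  · obtain ⟨m, rfl⟩ := Nat.exists_eq_add_of_le hkn
    suffices m * (f (k + m + 1) - f (k + m)) ≤ f (k + m) - f k by push_cast; linarith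
    induction m with
    | zero => simp
    | succ m ih =>
      have hslope : f (k + (m + 1) + 1) - f (k + (m + 1)) ≤ f (k + m + 1) - f (k + m) :=
        hf (by omega)
      have ih := ih (Nat.le_add_right k m)
      rw [← add_assoc] at hslope ⊢
      push_cast
      nlinarith [(Nat.cast_nonneg m : (0 : ℝ) ≤ m)]

theorem monotone (hf : IsConcaveSeq f) (h0 : ∀ n, 0 ≤ f n) : Monotone f := by
  refine monotone_nat_of_le_succ fun n => ?_
  by_contra! hdec
  obtain ⟨K, hK⟩ := exists_nat_gt (f n / (f n - f (n + 1)))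
  rw [div_lt_iff₀ (by linarith)] at hK
  have := hf.le_tangent n (n + K)
  push_cast at this
  nlinarith [h0 (n + K)]

end IsConcaveSeq

def affineMajorants (M : ℕ → ℝ) : Set (ℝ × ℝ) :=
  {p | ∀ k : ℕ, M k ≤ p.1 + p.2 * k}

/-- The least concave majorant of `M`. Since `sInf ∅ = 0`, it is meaningful only when
`affineMajorants M` is nonempty. -/
noncomputable def concaveMajorant (M : ℕ → ℝ) (n : ℕ) : ℝ :=
  sInf ((fun p : ℝ × ℝ => p.1 + p.2 * n) '' affineMajorants M)

section ConcaveMajorant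

variable {M : ℕ → ℝ}

theorem concaveMajorant_le {p : ℝ × ℝ} (hp : p ∈ affineMajorants M) (n : ℕ) :
    concaveMajorant M n ≤ p.1 + p.2 * n :=
  csInf_le ⟨M n, by rintro _ ⟨q, hq, rfl⟩; exact hq n⟩ ⟨p, hp, rfl⟩

theorem le_concaveMajorant (hM : (affineMajorants M).Nonempty) {n : ℕ} {x : ℝ}
    (h : ∀ p ∈ affineMajorants M, x ≤ p.1 + p.2 * n) : x ≤ concaveMajorant M n :=
  le_csInf (hM.image _) (by rintro _ ⟨p, hp, rfl⟩; exact h p hp)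

theorem self_le_concaveMajorant (hM : (affineMajorants M).Nonempty) (n : ℕ) :
    M n ≤ concaveMajorant M n :=
  le_concaveMajorant hM fun _ hp => hp n

theorem IsConcaveSeq.tangent_mem_affineMajorants {G : ℕ → ℝ} (hG : IsConcaveSeq G)
    (hMG : ∀ k, M k ≤ G k) (n : ℕ) :
    (G n - (G (n + 1) - G n) * n, G (n + 1) - G n) ∈ affineMajorants M := fun k => by
  linarith [hMG k, hG.le_tangent n k]

theorem IsConcaveSeq.concaveMajorant_le {G : ℕ → ℝ} (hG : IsConcaveSeq G)
    (hMG : ∀ k, M k ≤ G k) (n : ℕ) : concaveMajorant M n ≤ G n := by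
  have := _root_.concaveMajorant_le (hG.tangent_mem_affineMajorants hMG n) n
  simpa using this

theorem isConcaveSeq_concaveMajorant (hM : (affineMajorants M).Nonempty) :
    IsConcaveSeq (concaveMajorant M) := by
  refine isConcaveSeq_iff.2 fun n => ?_
  have h : (concaveMajorant M n + concaveMajorant M (n + 2)) / 2 ≤ concaveMajorant M (n + 1) :=
    le_concaveMajorant hM fun p hp => by
      have h₁ := concaveMajorant_le hp n
      have h₂ := concaveMajorant_le hp (n + 2)
      push_cast at h₁ h₂ ⊢
      linarith
  linarith

/-- Either `p` or `q` alone gives the bound, or the line through `(n, p n)` and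
`(n + 2, q (n + 2))`, lifted to pass above `M (n + 1)`, is again an affine majorant of `M`. -/
theorem two_mul_concaveMajorant_le_affine {n : ℕ} {D : ℝ} (hD : 0 ≤ D)
    (hMn : 2 * M (n + 1) ≤ M n + M (n + 2) + D) {p q : ℝ × ℝ}
    (hp : p ∈ affineMajorants M) (hq : q ∈ affineMajorants M) :
    2 * concaveMajorant M (n + 1) ≤ (p.1 + p.2 * n) + (q.1 + q.2 * (n + 2)) + D := by
  by_cases hpq : p.1 + p.2 * (n + 2) ≤ q.1 + q.2 * (n + 2)
  · have := concaveMajorant_le hp (n + 1)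
    push_cast at this
    linarith
  by_cases hqp : q.1 + q.2 * n ≤ p.1 + p.2 * n
  · have := concaveMajorant_le hq (n + 1)
    push_cast at this
    linarith
  set L := (p.1 + p.2 * n) + (q.1 + q.2 * (n + 2))
  set s := ((q.1 + q.2 * (n + 2)) - (p.1 + p.2 * n)) / 2 with hs
  set v := max (M (n + 1)) (L / 2) with hv
  have hsp : s ≤ p.2 := by rw [hs]; linarith
  have hqs : q.2 ≤ s := by rw [hs]; linarith
  have hline : (v - s * (n + 1), s) ∈ affineMajorants M := fun k => by
    show M k ≤ v - s * (n + 1) + s * k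
    have hv₁ : M (n + 1) ≤ v := le_max_left _ _
    have hv₂ : L / 2 ≤ v := le_max_right _ _
    rcases lt_trichotomy k (n + 1) with hk | rfl | hk
    · have hk : (k : ℝ) ≤ n := by exact_mod_cast Nat.lt_succ_iff.1 hk
      nlinarith [hp k, mul_nonneg (sub_nonneg.2 hsp) (sub_nonneg.2 hk)]
    · push_cast
      linarith
    · have hk : (n : ℝ) + 2 ≤ k := by exact_mod_cast hk
      nlinarith [hq k, mul_nonneg (sub_nonneg.2 hqs) (sub_nonneg.2 hk)]
  have hv : v ≤ (L + D) / 2 := by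
    have := hp n
    have := hq (n + 2)
    push_cast at *
    exact max_le (by linarith) (by linarith)
  have hU := concaveMajorant_le hline (n + 1)
  push_cast at hU
  linarith

theorem two_mul_concaveMajorant_le (hM : (affineMajorants M).Nonempty) {n : ℕ} {D : ℝ}
    (hD : 0 ≤ D) (hMn : 2 * M (n + 1) ≤ M n + M (n + 2) + D) :
    2 * concaveMajorant M (n + 1) ≤ concaveMajorant M n + concaveMajorant M (n + 2) + D := by
  have h : 2 * concaveMajorant M (n + 1) - D - concaveMajorant M n ≤ concaveMajorant M (n + 2) :=
    le_concaveMajorant hM fun q hq => by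
      have h' : 2 * concaveMajorant M (n + 1) - D - (q.1 + q.2 * (n + 2 : ℕ)) ≤
          concaveMajorant M n :=
        le_concaveMajorant hM fun p hp => by
          have := two_mul_concaveMajorant_le_affine hD hMn hp hq
          push_cast
          linarith
      linarith
  linarith

theorem IsConcaveSeq.sub_concaveMajorant {F : ℕ → ℝ} (hM : (affineMajorants M).Nonempty)
    (hF : IsConcaveSeq F) (hFM : IsConcaveSeq (F - M)) :
    IsConcaveSeq (F - concaveMajorant M) := by
  rw [isConcaveSeq_iff] at *
  intro n
  have := two_mul_concaveMajorant_le hM (n := n) (D := 2 * F (n + 1) - F n - F (n + 2))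
    (by linarith [hF n]) (by have := hFM n; simp only [Pi.sub_apply] at this; linarith)
  simp only [Pi.sub_apply]
  linarith

end ConcaveMajorant

theorem IsC0Star.antitone {ξ : ℕ → ℝ} (hξ : IsC0Star ξ) : Antitone ξ :=
  antitone_nat_of_succ_le hξ.2.1

theorem IsC0Star.add {ξ η : ℕ → ℝ} (hξ : IsC0Star ξ) (hη : IsC0Star η) :
    IsC0Star fun n => ξ n + η n :=
  ⟨fun n => add_nonneg (hξ.1 n) (hη.1 n), fun n => add_le_add (hξ.2.1 n) (hη.2.1 n),
    by simpa using hξ.2.2.add hη.2.2⟩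

theorem Maj.trans {ξ η ζ : ℕ → ℝ} (h₁ : Maj ξ η) (h₂ : Maj η ζ) : Maj ξ ζ :=
  fun n => (h₁ n).trans (h₂ n)

theorem maj_of_le {ξ η : ℕ → ℝ} (h : ∀ n, ξ n ≤ η n) : Maj ξ η :=
  fun _ => sum_le_sum fun j _ => h j

theorem Maj.add {ξ η ξ' η' : ℕ → ℝ} (h : Maj ξ η) (h' : Maj ξ' η') :
    Maj (fun n => ξ n + ξ' n) fun n => η n + η' n := fun n => by
  simpa only [sum_add_distrib] using add_le_add (h n) (h' n)

/-- `α n` is at most the Cesàro mean of `σ` over `0, …, n`. -/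
theorem Maj.tendsto_zero {α σ : ℕ → ℝ} (h : Maj α σ) (hα₀ : ∀ n, 0 ≤ α n) (hα : Antitone α)
    (hσ : Tendsto σ atTop (𝓝 0)) : Tendsto α atTop (𝓝 0) := by
  have hmean : Tendsto (fun n : ℕ => ((n + 1 : ℕ) : ℝ)⁻¹ * ∑ j ∈ range (n + 1), σ j) atTop (𝓝 0) :=
    hσ.cesaro.comp (tendsto_add_atTop_nat 1)
  refine squeeze_zero hα₀ (fun n => ?_) hmean
  rw [le_inv_mul_iff₀ (by positivity)]
  calc ((n + 1 : ℕ) : ℝ) * α n = ∑ j ∈ range (n + 1), α n := by simp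
    _ ≤ ∑ j ∈ range (n + 1), α j := sum_le_sum fun j hj => hα (Nat.lt_succ_iff.1 (mem_range.1 hj))
    _ ≤ ∑ j ∈ range (n + 1), σ j := h (n + 1)

theorem IsConcaveSeq.isC0Star_and_maj_increments {V σ : ℕ → ℝ} (hV : IsConcaveSeq V)
    (hV₀ : V 0 = 0) (hV_nonneg : ∀ n, 0 ≤ V n) (hVσ : ∀ n, V n ≤ ∑ j ∈ range n, σ j)
    (hσ : Tendsto σ atTop (𝓝 0)) :
    IsC0Star (fun n => V (n + 1) - V n) ∧ Maj (fun n => V (n + 1) - V n) σ := by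
  have hmaj : Maj (fun n => V (n + 1) - V n) σ := fun n => by
    rw [sum_range_sub, hV₀, sub_zero]
    exact hVσ n
  have hinc_nonneg : ∀ n, 0 ≤ V (n + 1) - V n :=
    fun n => sub_nonneg.2 (hV.monotone hV_nonneg n.le_succ)
  exact ⟨⟨hinc_nonneg, fun n => hV n.le_succ, hmaj.tendsto_zero hinc_nonneg hV hσ⟩, hmaj⟩

theorem Maj.exists_add_eq {ξ σ τ : ℕ → ℝ} (h : Maj ξ fun n => σ n + τ n)
    (hξ : IsC0Star ξ) (hσ : IsC0Star σ) (hτ : IsC0Star τ) :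
    ∃ α β, IsC0Star α ∧ IsC0Star β ∧ Maj α σ ∧ Maj β τ ∧ ∀ n, ξ n = α n + β n := by
  set F : ℕ → ℝ := fun n => ∑ j ∈ range n, ξ j
  set G : ℕ → ℝ := fun n => ∑ j ∈ range n, σ j
  set H : ℕ → ℝ := fun n => ∑ j ∈ range n, τ j
  set M : ℕ → ℝ := fun n => max (F n - H n) 0
  set U := concaveMajorant M
  have hF : IsConcaveSeq F := isConcaveSeq_sum_range hξ.antitone
  have hF₀ : ∀ n, 0 ≤ F n := fun n => sum_nonneg fun j _ => hξ.1 j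
  have hG₀ : ∀ n, 0 ≤ G n := fun n => sum_nonneg fun j _ => hσ.1 j
  have hH₀ : ∀ n, 0 ≤ H n := fun n => sum_nonneg fun j _ => hτ.1 j
  have hMF : ∀ n, M n ≤ F n := fun n => max_le (by linarith [hH₀ n]) (hF₀ n)
  have hMG : ∀ n, M n ≤ G n := fun n =>
    max_le (by linarith [(h n).trans_eq sum_add_distrib]) (hG₀ n)
  have hFM : IsConcaveSeq (F - M) := by
    convert (isConcaveSeq_sum_range hτ.antitone).min hF using 1
    funext n
    rw [Pi.sub_apply, ← min_sub_sub_left, sub_sub_cancel, sub_zero]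
  have hM : (affineMajorants M).Nonempty := ⟨_, hF.tangent_mem_affineMajorants hMF 0⟩
  have hMU : ∀ n, M n ≤ U n := self_le_concaveMajorant hM
  have hUF : ∀ n, U n ≤ F n := hF.concaveMajorant_le hMF
  have hU₀ : U 0 = 0 :=
    le_antisymm (by simpa [F] using hUF 0) ((le_max_right _ _).trans (hMU 0))
  obtain ⟨hα, hασ⟩ := (isConcaveSeq_concaveMajorant hM).isC0Star_and_maj_increments hU₀
    (fun n => (le_max_right _ _).trans (hMU n))
    ((isConcaveSeq_sum_range hσ.antitone).concaveMajorant_le hMG) hσ.2.2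
  obtain ⟨hβ, hβτ⟩ := (hF.sub_concaveMajorant hM hFM).isC0Star_and_maj_increments
    (show F 0 - U 0 = 0 by simp [F, hU₀]) (fun n => sub_nonneg.2 (hUF n))
    (fun n => show F n - U n ≤ H n by linarith [le_max_left (F n - H n) 0, hMU n]) hτ.2.2
  refine ⟨_, _, hα, hβ, hασ, hβτ, fun n => ?_⟩
  simp only [Pi.sub_apply, F, sum_range_succ]
  ring

theorem amClosure_setSum_subset {S T : Set (ℕ → ℝ)} (hS : ∀ σ ∈ S, IsC0Star σ)
    (hT : ∀ τ ∈ T, IsC0Star τ) : amClosure (setSum S T) ⊆ setSum (amClosure S) (amClosure T) := by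
  rintro ξ ⟨hξ, ρ, ⟨-, σ, hσS, τ, hτT, hρ⟩, hξρ⟩
  obtain ⟨α, β, hα, hβ, hασ, hβτ, hξ_eq⟩ :=
    (hξρ.trans (maj_of_le hρ)).exists_add_eq hξ (hS σ hσS) (hT τ hτT)
  exact ⟨hξ, α, ⟨hα, σ, hσS, hασ⟩, β, ⟨hβ, τ, hτT, hβτ⟩, fun n => (hξ_eq n).le⟩

theorem setSum_amClosure_subset {S T : Set (ℕ → ℝ)} (hS : ∀ σ ∈ S, IsC0Star σ)
    (hT : ∀ τ ∈ T, IsC0Star τ) : setSum (amClosure S) (amClosure T) ⊆ amClosure (setSum S T) := by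
  rintro ξ ⟨hξ, α, ⟨-, σ, hσS, hασ⟩, β, ⟨-, τ, hτT, hβτ⟩, hξαβ⟩
  have hστ := (hS σ hσS).add (hT τ hτT)
  exact ⟨hξ, _, ⟨hστ, σ, hσS, τ, hτT, fun _ => le_rfl⟩, (maj_of_le hξαβ).trans (hασ.add hβτ)⟩

theorem stmt_0 (S T : Set (ℕ → ℝ)) (hS : IsCharSet S) (hT : IsCharSet T) :
    amClosure (setSum S T) = setSum (amClosure S) (amClosure T) ∧
    (S = amClosure S → T = amClosure T → setSum S T = amClosure (setSum S T)) := by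
  have key : amClosure (setSum S T) = setSum (amClosure S) (amClosure T) :=
    (amClosure_setSum_subset hS.1 hT.1).antisymm (setSum_amClosure_subset hS.1 hT.1)
  refine ⟨key, fun hS_closed hT_closed => ?_⟩
  rw [key, ← hS_closed, ← hT_closed]
end

section
/- Let c : {1,2,...} → ℝ be nonnegative, nonincreasing, and converging to 0, and let ψ be the largest convex minorant of c, i.e., ψ_n := sup{φ_n : φ is a convex sequence (φ_{k+1} − φ_k is nondecreasing in k) with φ_k ≤ c_k for all k}. Then ψ_n ≥ (1/2)·c_{2n} for every n, i.e., (1/2)·D_{1/2}c ≤ ψ pointwise. -/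
/-- A convex sequence: the successive differences are nondecreasing. -/
def IsConvexSeq (φ : ℕ → ℝ) : Prop :=
  ∀ k, φ (k + 1) - φ k ≤ φ (k + 2) - φ (k + 1)

/-!
The line through `(0, c_m)` and `(m, 0)` is a convex minorant of any nonnegative
nonincreasing `c`: on `[0, m]` it stays below `c_m ≤ c_k`, beyond `m` it is negative.
At `n` with `m = 2n + 1` its value is `c_m (n + 1) / (2n + 1) ≥ c_m / 2`.
-/

theorem isConvexSeq_affine (a b : ℝ) : IsConvexSeq fun k => a + b * k :=
  fun k => le_of_eq (by push_cast; ring)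

theorem isConvexSeq_mul_one_sub_div (a m : ℝ) : IsConvexSeq fun k : ℕ => a * (1 - k / m) := by
  convert isConvexSeq_affine a (-(a / m)) using 2
  ring

theorem mul_one_sub_div_le_of_antitone {c : ℕ → ℝ} (hpos : ∀ k, 0 ≤ c k) (hanti : Antitone c)
    {m : ℕ} (hm : 0 < m) (k : ℕ) : c m * (1 - k / m) ≤ c k := by
  rcases le_total k m with hkm | hmk
  · calc c m * (1 - k / m) ≤ c m := mul_le_of_le_one_right (hpos m) (sub_le_self _ (by positivity))
      _ ≤ c k := hanti hkm
  · have : (1 : ℝ) - k / m ≤ 0 := by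
      rw [sub_nonpos, one_le_div (by exact_mod_cast hm)]
      exact_mod_cast hmk
    exact (mul_nonpos_of_nonneg_of_nonpos (hpos m) this).trans (hpos k)

theorem one_half_le_one_sub_div_two_mul_add_one (n : ℕ) :
    (1 / 2 : ℝ) ≤ 1 - n / ((2 * n + 1 : ℕ) : ℝ) := by
  rw [le_sub_comm, div_le_iff₀ (by positivity)]
  push_cast
  linarith

/-- If `ψ` is the largest convex minorant of `c`, then `ψ ≥ (1/2)·D_{1/2}c` pointwise. -/
theorem stmt_3 (c : ℕ → ℝ) (hc : IsC0Star c) (ψ : ℕ → ℝ)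
    (hψ : ∀ n, IsLUB {y : ℝ | ∃ φ : ℕ → ℝ, IsConvexSeq φ ∧ (∀ k, φ k ≤ c k) ∧ y = φ n} (ψ n)) :
    ∀ n, (1 / 2 : ℝ) * c (2 * n + 1) ≤ ψ n := by
  intro n
  obtain ⟨hpos, hdec, -⟩ := hc
  have hmin := mul_one_sub_div_le_of_antitone hpos (antitone_nat_of_succ_le hdec)
    (Nat.succ_pos (2 * n))
  calc (1 / 2 : ℝ) * c (2 * n + 1) = c (2 * n + 1) * (1 / 2) := mul_comm _ _
    _ ≤ c (2 * n + 1) * (1 - n / ((2 * n + 1 : ℕ) : ℝ)) :=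
      mul_le_mul_of_nonneg_left (one_half_le_one_sub_div_two_mul_add_one n) (hpos _)
    _ ≤ ψ n := (hψ n).1 ⟨_, isConvexSeq_mul_one_sub_div _ _, hmin, rfl⟩
end

section
/- Let ξ ∈ (ℓ¹)*. Then the following conditions are equivalent: (i) ξ_{a∞} = O(D_mξ) for some m ∈ ℕ (i.e., ξ is regular at infinity, (ξ) = (ξ)_{a∞}); (ii) ξ_{a∞} = O(ξ); (iii) there exist C > 0 and p > 1 such that ξ_n ≤ C·(m/n)^p·ξ_m for all integers n ≥ m ≥ 1; (iv) (ξ_{a∞})_{a∞} = O(ξ_{a∞}). -/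
/-- The arithmetic mean at infinity. -/
noncomputable def amInf (ξ : ℕ → ℝ) (n : ℕ) : ℝ :=
  (∑' k : ℕ, ξ (n + 1 + k)) / (n + 1)

/-- `ξ = O(η)`: `ξ_n ≤ C·η_n` for all `n`, for some `C > 0`. -/
def BigO (ξ η : ℕ → ℝ) : Prop :=
  ∃ C : ℝ, 0 < C ∧ ∀ n, ξ n ≤ C * η n

/-!
Write `T n = ∑_{j > n} ξ j`, so that `ξ_{a∞} n = T n / (n + 1)` and (ii) reads
`T n ≤ C (n + 1) ξ n`. As `(n + 1) ξ (2n + 1) ≤ T n - T (2n + 1)`, (ii) forces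
`T (2n + 1) ≤ r T n` with `r = 2C/(2C + 1) < 1`; iterating over dyadic blocks gives power decay
`T n ≤ K ((m + 1)/(n + 1))^q T m`, i.e. `ξ_{a∞}` decays with the exponent `q + 1 > 1`.
Since `ξ n ≤ ξ_{a∞} a` for `2a + 1 ≤ n`, this is (iii), and comparing `∑_{j > n} (j + 1)^{-p}`
with `∫ x^{-p}` turns any such decay of exponent `p > 1` into an `O`-bound on the mean at infinity:
this gives (iv), and (ii) from (iii). Both (i) ⇒ (ii) and (iv) ⇒ (ii) rest on
`T n ≤ T N + (N - n) ξ (n + 1)` with `N` a multiple of `n + 1`: under (i) the ampliation bounds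
`T N` by `ξ (n + 1)`, and under (iv), (iii) for `ξ_{a∞}` makes `T N ≤ T n / 2`.
-/

open Finset Filter

noncomputable def tailSum (ξ : ℕ → ℝ) (n : ℕ) : ℝ := ∑' k, ξ (n + 1 + k)

lemma amInf_eq_tailSum_div (ξ : ℕ → ℝ) (n : ℕ) : amInf ξ n = tailSum ξ n / (n + 1) := rfl

lemma sum_range_rpow_neg_le {x p : ℝ} (hx : 0 < x) (hp : 1 < p) (N : ℕ) :
    ∑ i ∈ range N, (x + (i + 1 : ℕ)) ^ (-p) ≤ x ^ (1 - p) / (p - 1) := by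
  have hanti : AntitoneOn (fun y : ℝ => y ^ (-p)) (Set.Icc x (x + N)) := fun a ha b _ hab =>
    Real.rpow_le_rpow_of_nonpos (hx.trans_le ha.1) hab (by linarith)
  have hend : 0 ≤ (x + N) ^ (1 - p) := by positivity
  calc _ ≤ ∫ y in x..x + N, y ^ (-p) := hanti.sum_le_integral
    _ = (x ^ (1 - p) - (x + N) ^ (1 - p)) / (p - 1) := by
        rw [integral_rpow (Or.inr ⟨by linarith, Set.notMem_uIcc_of_lt hx (by positivity)⟩),
          show -p + 1 = 1 - p by ring, ← neg_sub p 1, div_neg, ← neg_div, neg_sub]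
    _ ≤ x ^ (1 - p) / (p - 1) := by gcongr; linarith

lemma amInf_le_of_le_rpow {g : ℕ → ℝ} (hg : ∀ n, 0 ≤ g n) {A p : ℝ} (hA : 0 ≤ A) (hp : 1 < p)
    {n : ℕ} (h : ∀ j, n < j → g j ≤ A * ((n + 1 : ℝ) / (j + 1)) ^ p) :
    amInf g n ≤ A / (p - 1) := by
  set x : ℝ := n + 1
  have hx : 0 < x := by positivity
  have hterm : ∀ k : ℕ, g (n + 1 + k) ≤ A * x ^ p * (x + (k + 1 : ℕ)) ^ (-p) := by
    intro k
    have hxk : x + (k + 1 : ℕ) = ((n + 1 + k : ℕ) : ℝ) + 1 := by push_cast; ring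
    rw [hxk, Real.rpow_neg (by positivity), mul_assoc, ← div_eq_mul_inv,
      ← Real.div_rpow hx.le (by positivity)]
    exact h _ (by omega)
  have hnn : ∀ k : ℕ, 0 ≤ (x + (k + 1 : ℕ)) ^ (-p) := fun k => by positivity
  have hsumm := (summable_of_sum_range_le hnn (sum_range_rpow_neg_le hx hp)).mul_left (A * x ^ p)
  rw [amInf, div_le_iff₀ hx]
  calc ∑' k, g (n + 1 + k) ≤ ∑' k : ℕ, A * x ^ p * (x + (k + 1 : ℕ)) ^ (-p) :=
        (hsumm.of_nonneg_of_le (fun k => hg _) hterm).tsum_le_tsum hterm hsumm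
    _ = A * x ^ p * ∑' k : ℕ, (x + (k + 1 : ℕ)) ^ (-p) := tsum_mul_left
    _ ≤ A * x ^ p * (x ^ (1 - p) / (p - 1)) := by
        gcongr
        exact Real.tsum_le_of_sum_range_le hnn (sum_range_rpow_neg_le hx hp)
    _ = A / (p - 1) * x := by
        rw [mul_div_assoc', mul_assoc, ← Real.rpow_add hx, add_sub_cancel, Real.rpow_one]
        ring

lemma exists_rpow_decay_of_two_mul_add_one_le {f : ℕ → ℝ} (hf : Antitone f)
    (hf0 : ∀ n, 0 ≤ f n) {r : ℝ} (hr0 : 0 < r) (hr1 : r < 1)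
    (h : ∀ n, f (2 * n + 1) ≤ r * f n) :
    ∃ K : ℝ, 0 < K ∧ ∃ q : ℝ, 0 < q ∧
      ∀ m n : ℕ, m ≤ n → f n ≤ K * ((m + 1 : ℝ) / (n + 1)) ^ q * f m := by
  have hiter : ∀ m k, f (2 ^ k * (m + 1) - 1) ≤ r ^ k * f m := by
    intro m k
    induction k with
    | zero => simp
    | succ k ih =>
      have hpos : 0 < 2 ^ k * (m + 1) := by positivity
      have hdouble : 2 ^ (k + 1) * (m + 1) = 2 * (2 ^ k * (m + 1)) := by ring
      rw [show 2 ^ (k + 1) * (m + 1) - 1 = 2 * (2 ^ k * (m + 1) - 1) + 1 by omega, pow_succ']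
      calc _ ≤ r * f (2 ^ k * (m + 1) - 1) := h _
        _ ≤ r * (r ^ k * f m) := by gcongr
        _ = r * r ^ k * f m := by ring
  set q := -Real.logb 2 r
  have hr : r = (2⁻¹ : ℝ) ^ q := by
    rw [Real.inv_rpow zero_le_two, ← Real.rpow_neg zero_le_two, neg_neg,
      Real.rpow_logb two_pos (by norm_num) hr0]
  have hq : 0 < q := neg_pos.2 (Real.logb_neg one_lt_two hr0 hr1)
  refine ⟨2 ^ q, by positivity, q, hq, fun m n hmn => ?_⟩
  -- `k` is the number of doublings of `m + 1` that stay below `n + 1`.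
  set k := Nat.log 2 ((n + 1) / (m + 1))
  have hlow : 2 ^ k * (m + 1) ≤ n + 1 :=
    (Nat.le_div_iff_mul_le (by omega)).1 (Nat.pow_log_le_self 2 (by simp; omega))
  have hhigh : n + 1 < 2 ^ (k + 1) * (m + 1) :=
    (Nat.div_lt_iff_lt_mul (by omega)).1 (Nat.lt_pow_succ_log_self one_lt_two _)
  have hk : (2⁻¹ : ℝ) ^ k ≤ 2 * ((m + 1 : ℝ) / (n + 1)) := by
    have : (n + 1 : ℝ) < 2 ^ (k + 1) * (m + 1) := by exact_mod_cast hhigh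
    rw [inv_pow, inv_le_iff_one_le_mul₀ (by positivity), mul_right_comm, mul_div_assoc',
      one_le_div (by positivity), ← pow_succ']
    exact this.le
  have hrk : r ^ k ≤ 2 ^ q * ((m + 1 : ℝ) / (n + 1)) ^ q := by
    rw [hr, Real.rpow_pow_comm (by norm_num), ← Real.mul_rpow zero_le_two (by positivity)]
    exact Real.rpow_le_rpow (by positivity) hk hq.le
  calc f n ≤ f (2 ^ k * (m + 1) - 1) := hf (by omega)
    _ ≤ r ^ k * f m := hiter m k
    _ ≤ _ := by gcongr; exact hf0 m

section
variable {ξ : ℕ → ℝ}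

lemma tailSum_nonneg (h0 : ∀ n, 0 ≤ ξ n) (n : ℕ) : 0 ≤ tailSum ξ n :=
  tsum_nonneg fun _ => h0 _

lemma amInf_nonneg (h0 : ∀ n, 0 ≤ ξ n) (n : ℕ) : 0 ≤ amInf ξ n :=
  div_nonneg (tailSum_nonneg h0 n) (by positivity)

lemma tailSum_eq_add (hsum : Summable ξ) (n : ℕ) :
    tailSum ξ n = ξ (n + 1) + tailSum ξ (n + 1) := by
  have hshift : Summable fun k => ξ (n + 1 + k) := by
    simpa [add_comm] using (summable_nat_add_iff (n + 1)).2 hsum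
  rw [tailSum, hshift.tsum_eq_zero_add, tailSum]
  simp only [add_zero, add_assoc, add_comm 1]

lemma tailSum_antitone (h0 : ∀ n, 0 ≤ ξ n) (hsum : Summable ξ) : Antitone (tailSum ξ) :=
  antitone_nat_of_succ_le fun n => by linarith [tailSum_eq_add hsum n, h0 (n + 1)]

lemma amInf_antitone (h0 : ∀ n, 0 ≤ ξ n) (hsum : Summable ξ) : Antitone (amInf ξ) :=
  antitone_nat_of_succ_le fun n => by
    rw [amInf_eq_tailSum_div, amInf_eq_tailSum_div]
    exact div_le_div₀ (tailSum_nonneg h0 n) (tailSum_antitone h0 hsum n.le_succ) (by positivity)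
      (by push_cast; linarith)

lemma mul_le_tailSum_sub (hmono : Antitone ξ) (hsum : Summable ξ) {m n : ℕ} (h : m ≤ n) :
    ((n : ℝ) - m) * ξ n ≤ tailSum ξ m - tailSum ξ n := by
  induction n, h using Nat.le_induction with
  | base => simp
  | succ n hmn ih =>
    have hle : (m : ℝ) ≤ n := by exact_mod_cast hmn
    have := mul_le_mul_of_nonneg_left (hmono n.le_succ) (sub_nonneg.2 hle)
    rw [tailSum_eq_add hsum n] at ih
    push_cast
    linarith

lemma tailSum_sub_le_mul (hmono : Antitone ξ) (hsum : Summable ξ) {m n : ℕ} (h : m ≤ n) :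
    tailSum ξ m - tailSum ξ n ≤ ((n : ℝ) - m) * ξ (m + 1) := by
  induction n, h using Nat.le_induction with
  | base => simp
  | succ n hmn ih =>
    have := hmono (Nat.succ_le_succ hmn)
    rw [tailSum_eq_add hsum n] at ih
    push_cast
    linarith

lemma le_amInf_of_two_mul_add_one_le (h0 : ∀ n, 0 ≤ ξ n) (hmono : Antitone ξ) (hsum : Summable ξ)
    {a n : ℕ} (h : 2 * a + 1 ≤ n) : ξ n ≤ amInf ξ a := by
  have hgap : (a + 1 : ℝ) ≤ n - a := by
    have : (2 * a + 1 : ℝ) ≤ n := by exact_mod_cast h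
    linarith
  have := mul_le_tailSum_sub hmono hsum (show a ≤ n by omega)
  rw [amInf_eq_tailSum_div, le_div_iff₀ (by positivity)]
  nlinarith [tailSum_nonneg h0 n, h0 n]

lemma amInf_le_iff_tailSum_le {K q : ℝ} (m n : ℕ) :
    amInf ξ n ≤ K * ((m + 1 : ℝ) / (n + 1)) ^ (q + 1) * amInf ξ m ↔
      tailSum ξ n ≤ K * ((m + 1 : ℝ) / (n + 1)) ^ q * tailSum ξ m := by
  have hrhs : K * ((m + 1 : ℝ) / (n + 1)) ^ (q + 1) * amInf ξ m =
      K * ((m + 1 : ℝ) / (n + 1)) ^ q * tailSum ξ m / (n + 1) := by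
    rw [Real.rpow_add_one (by positivity), amInf_eq_tailSum_div]
    field_simp
  rw [hrhs, amInf_eq_tailSum_div, div_le_div_iff_of_pos_right (by positivity)]

lemma bigO_amInf_self_iff :
    BigO (amInf ξ) ξ ↔ ∃ C, 0 < C ∧ ∀ n, tailSum ξ n ≤ C * (n + 1) * ξ n := by
  refine exists_congr fun C => and_congr_right fun _ => forall_congr' fun n => ?_
  rw [amInf_eq_tailSum_div, div_le_iff₀ (by positivity), mul_right_comm]

lemma summable_amInf (h0 : ∀ n, 0 ≤ ξ n) (hsum : Summable ξ) (h : BigO (amInf ξ) ξ) :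
    Summable (amInf ξ) :=
  let ⟨C, _, hC⟩ := h
  (hsum.mul_left C).of_nonneg_of_le (amInf_nonneg h0) hC

lemma tailSum_two_mul_add_one_le (hmono : Antitone ξ) (hsum : Summable ξ)
    {C : ℝ} (hC : 0 < C) (h : ∀ n, tailSum ξ n ≤ C * (n + 1) * ξ n) (n : ℕ) :
    tailSum ξ (2 * n + 1) ≤ 2 * C / (2 * C + 1) * tailSum ξ n := by
  have hblock := mul_le_tailSum_sub hmono hsum (show n ≤ 2 * n + 1 by omega)
  have htail := h (2 * n + 1)
  push_cast at hblock htail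
  rw [div_mul_eq_mul_div, le_div_iff₀ (by positivity)]
  nlinarith [mul_le_mul_of_nonneg_left hblock (by positivity : (0 : ℝ) ≤ 2 * C)]

lemma exists_amInf_rpow_decay (h0 : ∀ n, 0 ≤ ξ n) (hmono : Antitone ξ) (hsum : Summable ξ)
    (h : BigO (amInf ξ) ξ) :
    ∃ K : ℝ, 0 < K ∧ ∃ p : ℝ, 1 < p ∧
      ∀ m n : ℕ, m ≤ n → amInf ξ n ≤ K * ((m + 1 : ℝ) / (n + 1)) ^ p * amInf ξ m := by
  obtain ⟨C, hC, hT⟩ := bigO_amInf_self_iff.1 h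
  obtain ⟨K, hK, q, hq, hdecay⟩ := exists_rpow_decay_of_two_mul_add_one_le
    (tailSum_antitone h0 hsum) (tailSum_nonneg h0) (by positivity)
    (by rw [div_lt_one (by positivity)]; linarith) (tailSum_two_mul_add_one_le hmono hsum hC hT)
  exact ⟨K, hK, q + 1, by linarith, fun m n hmn =>
    (amInf_le_iff_tailSum_le m n).2 (hdecay m n hmn)⟩

lemma exists_rpow_decay_of_bigO_amInf_self (h0 : ∀ n, 0 ≤ ξ n) (hmono : Antitone ξ)
    (hsum : Summable ξ) (h : BigO (amInf ξ) ξ) :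
    ∃ C : ℝ, 0 < C ∧ ∃ p : ℝ, 1 < p ∧
      ∀ m n : ℕ, m ≤ n → ξ n ≤ C * ((m + 1 : ℝ) / (n + 1)) ^ p * ξ m := by
  obtain ⟨K, hK, p, hp, hdecay⟩ := exists_amInf_rpow_decay h0 hmono hsum h
  obtain ⟨C, hC, hCξ⟩ := h
  refine ⟨3 ^ p * (K * C + 1), by positivity, p, hp, fun m n hmn => ?_⟩
  set R : ℝ := (m + 1) / (n + 1)
  have hR : 0 ≤ R := by positivity
  have hnear0 : 0 ≤ 3 ^ p * R ^ p * ξ m := mul_nonneg (by positivity) (h0 m)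
  have hfar0 : 0 ≤ 3 ^ p * (K * C) * R ^ p * ξ m := mul_nonneg (by positivity) (h0 m)
  rw [show 3 ^ p * (K * C + 1) * R ^ p * ξ m = 3 ^ p * (K * C) * R ^ p * ξ m + 3 ^ p * R ^ p * ξ m
    by ring]
  rcases lt_or_ge n (2 * m + 1) with hclose | hapart
  · have h3R : 1 ≤ 3 * R := by
      rw [mul_div_assoc', le_div_iff₀ (by positivity)]
      have : (n : ℝ) + 1 ≤ 2 * m + 1 := by exact_mod_cast hclose
      linarith
    have : ξ n ≤ 3 ^ p * R ^ p * ξ m := by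
      rw [← Real.mul_rpow (by norm_num) hR]
      exact le_mul_of_one_le_left (h0 m) (Real.one_le_rpow h3R (by linarith)) |>.trans'
        (hmono hmn)
    linarith
  · set a := (n - 1) / 2
    have hRa : (m + 1 : ℝ) / (a + 1) ≤ 3 * R := by
      rw [mul_div_assoc', div_le_div_iff₀ (by positivity) (by positivity)]
      have : (n : ℝ) + 1 ≤ 3 * (a + 1) := by exact_mod_cast (show n + 1 ≤ 3 * (a + 1) by omega)
      nlinarith
    have : ξ n ≤ 3 ^ p * (K * C) * R ^ p * ξ m :=
      calc ξ n ≤ amInf ξ a := le_amInf_of_two_mul_add_one_le h0 hmono hsum (by omega)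
        _ ≤ K * ((m + 1 : ℝ) / (a + 1)) ^ p * amInf ξ m := hdecay m a (by omega)
        _ ≤ K * (3 * R) ^ p * (C * ξ m) := by
            gcongr
            exacts [amInf_nonneg h0 m, hCξ m]
        _ = 3 ^ p * (K * C) * R ^ p * ξ m := by rw [Real.mul_rpow (by norm_num) hR]; ring
    linarith

lemma bigO_amInf_self_of_rpow_decay (h0 : ∀ n, 0 ≤ ξ n) {C p : ℝ} (hC : 0 < C) (hp : 1 < p)
    (h : ∀ m n : ℕ, m ≤ n → ξ n ≤ C * ((m + 1 : ℝ) / (n + 1)) ^ p * ξ m) :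
    BigO (amInf ξ) ξ :=
  ⟨C / (p - 1), div_pos hC (by linarith), fun n => by
    rw [div_mul_eq_mul_div]
    exact amInf_le_of_le_rpow h0 (mul_nonneg hC.le (h0 n)) hp fun j hj =>
      (h n j hj.le).trans_eq (by ring)⟩

lemma bigO_amInf_amInf (h0 : ∀ n, 0 ≤ ξ n) (hmono : Antitone ξ) (hsum : Summable ξ)
    (h : BigO (amInf ξ) ξ) : BigO (amInf (amInf ξ)) (amInf ξ) := by
  obtain ⟨K, hK, p, hp, hdecay⟩ := exists_amInf_rpow_decay h0 hmono hsum h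
  refine ⟨K / (p - 1), div_pos hK (by linarith), fun n => ?_⟩
  rw [div_mul_eq_mul_div]
  exact amInf_le_of_le_rpow (amInf_nonneg h0) (mul_nonneg hK.le (amInf_nonneg h0 n)) hp
    fun j hj => (hdecay n j hj.le).trans_eq (by ring)

lemma bigO_amInf_self_of_bigO_ampliation (h0 : ∀ n, 0 ≤ ξ n) (hmono : Antitone ξ)
    (hsum : Summable ξ) {m : ℕ} (hm : 0 < m) (h : BigO (amInf ξ) fun n => ξ (n / m)) :
    BigO (amInf ξ) ξ := by
  obtain ⟨C, hC, hCm⟩ := h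
  refine bigO_amInf_self_iff.2 ⟨C * (m + 1) + m, by positivity, fun n => ?_⟩
  have hnN : n ≤ m * (n + 1) := by nlinarith
  have hTN : tailSum ξ (m * (n + 1)) ≤ C * (m * (n + 1) + 1) * ξ (n + 1) := by
    have := hCm (m * (n + 1))
    dsimp only at this
    rw [Nat.mul_div_cancel_left _ hm, amInf_eq_tailSum_div, div_le_iff₀ (by positivity)] at this
    push_cast at this ⊢
    linarith
  have hblock := tailSum_sub_le_mul hmono hsum hnN
  push_cast at hblock
  have hn : (0 : ℝ) ≤ n := n.cast_nonneg
  have hcoeff : C * (m * (n + 1) + 1) + (m * (n + 1) - n) ≤ (C * (m + 1) + m) * (n + 1) := by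
    nlinarith
  calc tailSum ξ n ≤ (C * (m * (n + 1) + 1) + (m * (n + 1) - n)) * ξ (n + 1) := by linarith
    _ ≤ (C * (m + 1) + m) * (n + 1) * ξ (n + 1) := by gcongr; exact h0 _
    _ ≤ (C * (m + 1) + m) * (n + 1) * ξ n := by gcongr; exact hmono n.le_succ

lemma bigO_amInf_self_of_tailSum_le_mul (h0 : ∀ n, 0 ≤ ξ n) (hmono : Antitone ξ)
    (hsum : Summable ξ) {L : ℕ} (hL : 1 ≤ L) {c : ℝ} (hc : c < 1)
    (h : ∀ n, tailSum ξ (L * (n + 1)) ≤ c * tailSum ξ n) : BigO (amInf ξ) ξ := by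
  refine bigO_amInf_self_iff.2 ⟨L / (1 - c), div_pos (by exact_mod_cast hL) (by linarith),
    fun n => ?_⟩
  have hblock := tailSum_sub_le_mul hmono hsum (show n ≤ L * (n + 1) by nlinarith)
  push_cast at hblock
  have hξ : ((L : ℝ) * (n + 1) - n) * ξ (n + 1) ≤ L * (n + 1) * ξ n :=
    mul_le_mul (by linarith [n.cast_nonneg (α := ℝ)]) (hmono n.le_succ) (h0 _) (by positivity)
  rw [div_mul_eq_mul_div, div_mul_eq_mul_div, le_div_iff₀ (by linarith)]
  nlinarith [h n]

lemma bigO_amInf_self_of_bigO_amInf_amInf (h0 : ∀ n, 0 ≤ ξ n) (hmono : Antitone ξ)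
    (hsum : Summable ξ) (hη : Summable (amInf ξ)) (h : BigO (amInf (amInf ξ)) (amInf ξ)) :
    BigO (amInf ξ) ξ := by
  obtain ⟨C, hC, p, hp, hdecay⟩ :=
    exists_rpow_decay_of_bigO_amInf_self (amInf_nonneg h0) (amInf_antitone h0 hsum) hη h
  have hs : 0 < p - 1 := by linarith
  obtain ⟨L, hL1, hL⟩ : ∃ L : ℕ, 1 ≤ L ∧ 2 * C ≤ (L : ℝ) ^ (p - 1) :=
    ((eventually_ge_atTop 1).and (((tendsto_rpow_atTop hs).comp
      tendsto_natCast_atTop_atTop).eventually_ge_atTop (2 * C))).exists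
  refine bigO_amInf_self_of_tailSum_le_mul h0 hmono hsum hL1 (c := 1 / 2) (by norm_num)
    fun n => ?_
  have hT := (amInf_le_iff_tailSum_le (q := p - 1) n (L * (n + 1))).1
    (by rw [sub_add_cancel]; exact hdecay n _ (by nlinarith))
  have hLpos : (0 : ℝ) < L := by exact_mod_cast hL1
  have hsmall : C * ((n + 1 : ℝ) / ((L * (n + 1) : ℕ) + 1)) ^ (p - 1) ≤ 1 / 2 := by
    calc _ ≤ C * ((L : ℝ)⁻¹) ^ (p - 1) := by
          gcongr
          rw [div_le_iff₀ (by positivity)]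
          push_cast
          field_simp
          linarith
      _ ≤ 1 / 2 := by
          rw [Real.inv_rpow hLpos.le, ← div_eq_mul_inv, div_le_iff₀ (by positivity)]
          linarith
  exact hT.trans (mul_le_mul_of_nonneg_right hsmall (tailSum_nonneg h0 n))

end

theorem stmt_5 (ξ : ℕ → ℝ) (hξ : IsC0Star ξ) (hsum : Summable ξ) :
    ((∃ m : ℕ, 0 < m ∧ BigO (amInf ξ) (fun n => ξ (n / m))) ↔ BigO (amInf ξ) ξ) ∧
    (BigO (amInf ξ) ξ ↔
      ∃ C : ℝ, 0 < C ∧ ∃ p : ℝ, 1 < p ∧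
        ∀ m n : ℕ, m ≤ n → ξ n ≤ C * ((m + 1 : ℝ) / (n + 1)) ^ p * ξ m) ∧
    (BigO (amInf ξ) ξ ↔ (Summable (amInf ξ) ∧ BigO (amInf (amInf ξ)) (amInf ξ))) := by
  obtain ⟨h0, hstep, -⟩ := hξ
  have hmono : Antitone ξ := antitone_nat_of_succ_le hstep
  refine ⟨⟨?_, ?_⟩, ⟨?_, ?_⟩, ⟨?_, ?_⟩⟩
  · rintro ⟨m, hm, h⟩
    exact bigO_amInf_self_of_bigO_ampliation h0 hmono hsum hm h
  · exact fun h => ⟨1, one_pos, by simpa using h⟩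
  · exact exists_rpow_decay_of_bigO_amInf_self h0 hmono hsum
  · rintro ⟨C, hC, p, hp, h⟩
    exact bigO_amInf_self_of_rpow_decay h0 hC hp h
  · exact fun h => ⟨summable_amInf h0 hsum h, bigO_amInf_amInf h0 hmono hsum h⟩
  · rintro ⟨hη, h⟩
    exact bigO_amInf_self_of_bigO_amInf_amInf h0 hmono hsum hη h
end

section
/- Let ξ ∈ c₀* be nonsummable. (i) If η ∈ c₀* satisfies (η_a)_n ≥ (ξ_a)_n for all n, then for every ε > 0 there is N such that η_n ≥ (1 − ε)·ξ̂_n for all n ≥ N. (ii) For every ρ ∈ c₀* for which there exist no m ∈ ℕ and C > 0 with ρ_n ≤ C·ξ̂_{⌈n/m⌉} for all n, there exists η ∈ c₀* with (η_a)_n ≥ (ξ_a)_n for all n and for which there exist no m ∈ ℕ and C > 0 with ρ_n ≤ C·η_{⌈n/m⌉} for all n. -/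
/-- The arithmetic mean `(ξ_a)_n = (1/n)∑_{j=1}^n ξ_j` (0-based indexing). -/
noncomputable def am (ξ : ℕ → ℝ) (n : ℕ) : ℝ :=
  (∑ j ∈ Finset.range (n + 1), ξ j) / (n + 1)

/-- `nuIdx ξ n` is (the 0-based version of) `ν(ξ)_{n+1} := min{k ≥ 1 : ∑_{i=1}^k ξ_i ≥ (n+1)ξ₁}`. -/
noncomputable def nuIdx (ξ : ℕ → ℝ) (n : ℕ) : ℕ :=
  sInf {k : ℕ | (n + 1 : ℝ) * ξ 0 ≤ ∑ i ∈ Finset.range (k + 1), ξ i}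

/-- `ξ̂_n := (ξ_a)_{ν(ξ)_n}` (0-based indexing). -/
noncomputable def hatSeq (ξ : ℕ → ℝ) (n : ℕ) : ℝ := am ξ (nuIdx ξ n)


/-!
A sequence `η` whose arithmetic means dominate those of `ξ` has, at the index
`ν = nuIdx ξ q`, a partial sum of at least `(q+1)ξ₀`; the first `q` terms contribute
only `o(q)` (Cesàro), so the remaining `ν - q` terms, each at most `η_q`, carry almost all of
`(ν+1)·ξ̂_q`. This gives (i).

For (ii), beyond `p` the partial sums of `ξ` lie below the line `hatLine ξ p` of slope `ξ̂_p`
through `(p, (p+1)ξ₀)`. We build `η` as a step function equal to `ξ̂_{p_k}` on a plateau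
`[q_k, q_{k+1})`; on it the partial sums of `η` grow with the slope of `hatLine ξ p_k`, so they
stay above that line once they start above it. At the `k`-th
switch we pick a point `n` where `ρ_n > (k+1)·ξ̂_{n/m}`, for an ampliation `m` that is a large
multiple of `k+1`, and set `q_{k+1} = n/(k+1)`, `p_{k+1} = n/m`: the new line then still lies
below the old one. Since `η` is then `ξ̂_{p_{k+1}}` at `n/(k+1)`,
no ampliation of `η` dominates `ρ`.
-/

open Filter Finset

noncomputable def partialSum (ξ : ℕ → ℝ) (n : ℕ) : ℝ := ∑ j ∈ range (n + 1), ξ j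

noncomputable def hatLine (ξ : ℕ → ℝ) (p : ℕ) (x : ℝ) : ℝ :=
  (p + 1) * ξ 0 + (x - p) * hatSeq ξ p

/-- `k` such that `n ∈ [Q k, Q (k+1))`, for `Q` strictly monotone with `Q 0 = 0`. -/
def plateauIndex (Q : ℕ → ℕ) (n : ℕ) : ℕ := Nat.findGreatest (fun k => Q k ≤ n) n

section PlateauIndex

variable {Q : ℕ → ℕ}

theorem le_plateauIndex (hQ : StrictMono Q) {k n : ℕ} (h : Q k ≤ n) : k ≤ plateauIndex Q n :=
  Nat.le_findGreatest ((hQ.id_le k).trans h) h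

theorem start_plateauIndex_le (hQ0 : Q 0 = 0) (n : ℕ) : Q (plateauIndex Q n) ≤ n :=
  Nat.findGreatest_spec (P := fun k => Q k ≤ n) (Nat.zero_le n) (by simp [hQ0])

theorem lt_start_plateauIndex_succ (hQ : StrictMono Q) (n : ℕ) : n < Q (plateauIndex Q n + 1) := by
  by_contra! h
  exact (le_plateauIndex hQ h).not_gt (Nat.lt_succ_self _)

theorem plateauIndex_eq (hQ : StrictMono Q) (hQ0 : Q 0 = 0) {k n : ℕ} (h₁ : Q k ≤ n)
    (h₂ : n < Q (k + 1)) : plateauIndex Q n = k := by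
  have : plateauIndex Q n < k + 1 := hQ.lt_iff_lt.1 ((start_plateauIndex_le hQ0 n).trans_lt h₂)
  exact le_antisymm (Nat.lt_succ_iff.1 this) (le_plateauIndex hQ h₁)

theorem plateauIndex_start (hQ : StrictMono Q) (hQ0 : Q 0 = 0) (k : ℕ) : plateauIndex Q (Q k) = k :=
  plateauIndex_eq hQ hQ0 le_rfl (hQ (Nat.lt_succ_self k))

theorem plateauIndex_mono : Monotone (plateauIndex Q) := fun _ _ h =>
  Nat.findGreatest_mono (fun _ hk => hk.trans h) h

theorem tendsto_plateauIndex (hQ : StrictMono Q) : Tendsto (plateauIndex Q) atTop atTop :=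
  tendsto_atTop_atTop.2 fun k => ⟨Q k, fun _ h => le_plateauIndex hQ h⟩

theorem plateauIndex_succ (hQ : StrictMono Q) (hQ0 : Q 0 = 0) (n : ℕ) :
    plateauIndex Q (n + 1) = plateauIndex Q n ∨
      plateauIndex Q (n + 1) = plateauIndex Q n + 1 ∧ Q (plateauIndex Q n + 1) = n + 1 := by
  set k := plateauIndex Q n
  have hk : Q k ≤ n := start_plateauIndex_le hQ0 n
  have hk' : n < Q (k + 1) := lt_start_plateauIndex_succ hQ n
  rcases (show n + 1 ≤ Q (k + 1) from hk').lt_or_eq with hlt | heq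
  · exact Or.inl (plateauIndex_eq hQ hQ0 (hk.trans n.le_succ) hlt)
  · exact Or.inr ⟨plateauIndex_eq hQ hQ0 heq.ge (by rw [heq]; exact hQ (Nat.lt_succ_self _)), heq.symm⟩

end PlateauIndex

section Means

variable {ξ η : ℕ → ℝ}

theorem partialSum_succ (ξ : ℕ → ℝ) (n : ℕ) :
    partialSum ξ (n + 1) = partialSum ξ n + ξ (n + 1) :=
  sum_range_succ _ _

theorem am_eq_partialSum_div (ξ : ℕ → ℝ) (n : ℕ) : am ξ n = partialSum ξ n / (n + 1) := rfl

theorem am_le_am_iff {n : ℕ} : am ξ n ≤ am η n ↔ partialSum ξ n ≤ partialSum η n :=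
  div_le_div_iff_of_pos_right (by positivity)

theorem partialSum_le_add_mul (hη : Antitone η) {q k : ℕ} (h : q ≤ k) :
    partialSum η k ≤ partialSum η q + (k - q) * η q := by
  induction k, h using Nat.le_induction with
  | base => simp
  | succ k hqk ih =>
    rw [partialSum_succ]
    have := hη (hqk.trans k.le_succ)
    push_cast
    linarith

theorem succ_mul_le_partialSum (hξ : Antitone ξ) {n k : ℕ} (h : n ≤ k) :
    (n + 1) * ξ k ≤ partialSum ξ n := by
  simpa [partialSum] using card_nsmul_le_sum (range (n + 1)) ξ (ξ k)
    fun j hj => hξ ((Nat.lt_succ_iff.1 (mem_range.1 hj)).trans h)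

theorem partialSum_le_succ_mul (hξ : Antitone ξ) (n : ℕ) : partialSum ξ n ≤ (n + 1) * ξ 0 := by
  simpa [partialSum] using sum_le_card_nsmul (range (n + 1)) ξ (ξ 0) fun j _ => hξ (Nat.zero_le j)

theorem am_le_apply_zero (hξ : Antitone ξ) (n : ℕ) : am ξ n ≤ ξ 0 := by
  rw [am_eq_partialSum_div, div_le_iff₀ (by positivity), mul_comm]
  exact partialSum_le_succ_mul hξ n

theorem am_nonneg (hξ0 : ∀ n, 0 ≤ ξ n) (n : ℕ) : 0 ≤ am ξ n :=
  div_nonneg (sum_nonneg fun j _ => hξ0 j) (by positivity)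

theorem am_antitone (hξ : Antitone ξ) : Antitone (am ξ) := by
  refine antitone_nat_of_succ_le fun n => ?_
  have h := succ_mul_le_partialSum hξ (Nat.le_succ n)
  rw [am_eq_partialSum_div, am_eq_partialSum_div, partialSum_succ,
    div_le_div_iff₀ (by positivity) (by positivity)]
  push_cast
  nlinarith

theorem tendsto_am (hξ : Tendsto ξ atTop (nhds 0)) : Tendsto (am ξ) atTop (nhds 0) := by
  refine (hξ.cesaro.comp (tendsto_add_atTop_nat 1)).congr fun n => ?_
  simp [am, div_eq_inv_mul]

end Means

section Hat

variable {ξ : ℕ → ℝ}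

theorem zero_lt_of_not_summable (hξ : Antitone ξ) (hξ0 : ∀ n, 0 ≤ ξ n) (hns : ¬ Summable ξ) :
    0 < ξ 0 := by
  refine (hξ0 0).lt_of_ne fun h => hns ?_
  convert summable_zero with n
  exact le_antisymm (h ▸ hξ (Nat.zero_le n)) (hξ0 n)

theorem succ_mul_le_partialSum_nuIdx (hξ0 : ∀ n, 0 ≤ ξ n) (hns : ¬ Summable ξ) (n : ℕ) :
    (n + 1) * ξ 0 ≤ partialSum ξ (nuIdx ξ n) := by
  obtain ⟨N, hN⟩ := eventually_atTop.1
    (((not_summable_iff_tendsto_nat_atTop_of_nonneg hξ0).1 hns).eventually_ge_atTop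
      ((n + 1) * ξ 0))
  exact Nat.sInf_mem (s := {k | ((n : ℝ) + 1) * ξ 0 ≤ ∑ i ∈ range (k + 1), ξ i})
    ⟨N, hN (N + 1) N.le_succ⟩

theorem partialSum_lt_of_lt_nuIdx {n j : ℕ} (h : j < nuIdx ξ n) :
    partialSum ξ j < (n + 1) * ξ 0 :=
  not_le.1 (Nat.notMem_of_lt_sInf h)

theorem le_nuIdx (hξ : Antitone ξ) (hξ0 : ∀ n, 0 ≤ ξ n) (hns : ¬ Summable ξ) (n : ℕ) :
    n ≤ nuIdx ξ n := by
  have h := (succ_mul_le_partialSum_nuIdx hξ0 hns n).trans (partialSum_le_succ_mul hξ _)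
  have h' := le_of_mul_le_mul_right h (zero_lt_of_not_summable hξ hξ0 hns)
  exact_mod_cast (add_le_add_iff_right 1).1 h'

theorem tendsto_hatSeq (hξ : Antitone ξ) (hξ0 : ∀ n, 0 ≤ ξ n) (hns : ¬ Summable ξ)
    (hlim : Tendsto ξ atTop (nhds 0)) : Tendsto (hatSeq ξ) atTop (nhds 0) :=
  (tendsto_am hlim).comp (tendsto_atTop_mono (le_nuIdx hξ hξ0 hns) tendsto_id)

theorem hatSeq_pos (hξ : Antitone ξ) (hξ0 : ∀ n, 0 ≤ ξ n) (hns : ¬ Summable ξ) (n : ℕ) :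
    0 < hatSeq ξ n := by
  have h := succ_mul_le_partialSum_nuIdx hξ0 hns n
  have := zero_lt_of_not_summable hξ hξ0 hns
  rw [hatSeq, am_eq_partialSum_div]
  exact div_pos (by nlinarith) (by positivity)

theorem hatSeq_nonneg (hξ0 : ∀ n, 0 ≤ ξ n) (n : ℕ) : 0 ≤ hatSeq ξ n := am_nonneg hξ0 _

theorem hatSeq_zero : hatSeq ξ 0 = ξ 0 := by
  have : nuIdx ξ 0 = 0 := Nat.sInf_eq_zero.2 (Or.inl (by simp))
  simp [hatSeq, am, this]

theorem hatLine_add_one (ξ : ℕ → ℝ) (p : ℕ) (x : ℝ) :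
    hatLine ξ p (x + 1) = hatLine ξ p x + hatSeq ξ p := by
  unfold hatLine
  ring

theorem partialSum_le_hatLine (hξ : Antitone ξ) (hξ0 : ∀ n, 0 ≤ ξ n) {p j : ℕ} (h : p ≤ j) :
    partialSum ξ j ≤ hatLine ξ p j := by
  have hw0 := hatSeq_nonneg hξ0 p
  have hwξ : hatSeq ξ p ≤ ξ 0 := am_le_apply_zero hξ _
  have hpj : (p : ℝ) ≤ j := by exact_mod_cast h
  unfold hatLine
  rcases lt_or_ge j (nuIdx ξ p) with hj | hj
  · nlinarith [partialSum_lt_of_lt_nuIdx hj]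
  · have : am ξ j ≤ hatSeq ξ p := am_antitone hξ hj
    rw [am_eq_partialSum_div, div_le_iff₀ (by positivity)] at this
    nlinarith

theorem hatLine_le_hatLine (hξ : Antitone ξ) (hξ0 : ∀ n, 0 ≤ ξ n) {p p' : ℕ} {x : ℝ}
    (hx : 0 ≤ x) (hhalf : hatSeq ξ p' ≤ hatSeq ξ p / 2) (h : 2 * p' * ξ 0 ≤ x * hatSeq ξ p) :
    hatLine ξ p' x ≤ hatLine ξ p x := by
  have hw' := hatSeq_nonneg hξ0 p'
  have hw : hatSeq ξ p ≤ ξ 0 := am_le_apply_zero hξ _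
  unfold hatLine
  nlinarith [mul_nonneg (Nat.cast_nonneg p' : (0 : ℝ) ≤ p') hw',
    mul_nonneg hx (sub_nonneg.2 hhalf), mul_nonneg (Nat.cast_nonneg p : (0 : ℝ) ≤ p) (sub_nonneg.2 hw)]

end Hat

theorem frequently_lt_mul_of_not_dominated {f ρ : ℕ → ℝ} (hf : ∀ n, 0 < f n)
    (h : ¬ ∃ C : ℝ, 0 < C ∧ ∀ n, ρ n ≤ C * f n) (C : ℝ) : ∃ᶠ n in atTop, C * f n < ρ n := by
  refine fun hev => h ?_
  obtain ⟨N, hN⟩ := eventually_atTop.1 hev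
  obtain ⟨M, hM⟩ := ((Set.finite_Iio N).image fun n => ρ n / f n).bddAbove
  refine ⟨max (max C M) 1, by positivity, fun n => ?_⟩
  rcases lt_or_ge n N with hn | hn
  · have := hM ⟨n, hn, rfl⟩
    rw [div_le_iff₀ (hf n)] at this
    exact this.trans (mul_le_mul_of_nonneg_right ((le_max_right C M).trans (le_max_left _ _)) (hf n).le)
  · exact (not_lt.1 (hN n hn)).trans
      (mul_le_mul_of_nonneg_right ((le_max_left C M).trans (le_max_left _ _)) (hf n).le)

theorem eventually_one_sub_mul_hatSeq_le {ξ η : ℕ → ℝ} (hξ : Antitone ξ) (hξ0 : ∀ n, 0 ≤ ξ n)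
    (hns : ¬ Summable ξ) (hη : IsC0Star η) (hdom : ∀ n, am ξ n ≤ am η n) {ε : ℝ} (hε : 0 < ε) :
    ∃ N : ℕ, ∀ n, N ≤ n → (1 - ε) * hatSeq ξ n ≤ η n := by
  obtain ⟨hη0, hηsucc, hηlim⟩ := hη
  obtain ⟨N, hN⟩ := eventually_atTop.1 ((tendsto_am hηlim).eventually
    (eventually_le_nhds (mul_pos hε (zero_lt_of_not_summable hξ hξ0 hns))))
  refine ⟨N, fun q hq => ?_⟩
  set ν := nuIdx ξ q
  have hqν : q ≤ ν := le_nuIdx hξ hξ0 hns q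
  have hqν' : (q : ℝ) ≤ ν := by exact_mod_cast hqν
  have hν := succ_mul_le_partialSum_nuIdx hξ0 hns q
  have hhead : partialSum η q ≤ ε * ξ 0 * (q + 1) := by
    have := hN q hq
    rwa [am_eq_partialSum_div, div_le_iff₀ (by positivity)] at this
  have htail := partialSum_le_add_mul (antitone_nat_of_succ_le hηsucc) hqν
  have hdomν := am_le_am_iff.1 (hdom ν)
  have hhat : partialSum ξ ν = (ν + 1) * hatSeq ξ q := by
    change _ = (ν + 1) * (partialSum ξ ν / (ν + 1))
    field_simp
  refine le_of_mul_le_mul_left ?_ (show (0 : ℝ) < ν + 1 by positivity)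
  calc (ν + 1) * ((1 - ε) * hatSeq ξ q) = (1 - ε) * partialSum ξ ν := by rw [hhat]; ring
    _ ≤ partialSum ξ ν - ε * ((q + 1) * ξ 0) := by nlinarith
    _ ≤ (ν - q) * η q := by linarith
    _ ≤ (ν + 1) * η q := mul_le_mul_of_nonneg_right (by linarith) (hη0 q)

theorem exists_next_plateau {ξ ρ : ℕ → ℝ} (hξ : Antitone ξ) (hξ0 : ∀ n, 0 ≤ ξ n)
    (hns : ¬ Summable ξ) (hlim : Tendsto ξ atTop (nhds 0))
    (hρ : ¬ ∃ m : ℕ, 0 < m ∧ ∃ C : ℝ, 0 < C ∧ ∀ n, ρ n ≤ C * hatSeq ξ (n / m)) (k q p : ℕ) :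
    ∃ q' p' : ℕ, q < q' ∧ p' ≤ q' ∧ hatSeq ξ p' ≤ hatSeq ξ p / 2 ∧
      hatLine ξ p' ↑(q' - 1) ≤ hatLine ξ p ↑(q' - 1) ∧
      ∃ n, n / (k + 1) = q' ∧ (k + 1) * hatSeq ξ p' < ρ n := by
  have hpos := hatSeq_pos hξ hξ0 hns
  set w := hatSeq ξ p
  have hw : 0 < w := hpos p
  have hξ00 := zero_lt_of_not_summable hξ hξ0 hns
  -- `n / m = (n / (k+1)) / L` with `L ξ̂_p ≥ 4ξ₀`, so `n / m` is negligible against `n / (k+1)`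
  set L := ⌈4 * ξ 0 / w⌉₊
  have hL : 4 * ξ 0 ≤ L * w := (div_le_iff₀ hw).1 (Nat.le_ceil _)
  have hL0 : 0 < L := Nat.ceil_pos.2 (by positivity)
  have hm : (k + 1) * L ≠ 0 := by positivity
  have hfreq := frequently_lt_mul_of_not_dominated (fun n => hpos (n / ((k + 1) * L)))
    (fun ⟨C, hC, h⟩ => hρ ⟨_, Nat.pos_of_ne_zero hm, C, hC, h⟩) (k + 1)
  have hev : ∀ᶠ n in atTop, (q + 2) * (k + 1) ≤ n ∧ hatSeq ξ (n / ((k + 1) * L)) ≤ w / 2 :=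
    (eventually_ge_atTop _).and (((tendsto_hatSeq hξ hξ0 hns hlim).comp
      (Nat.tendsto_div_const_atTop hm)).eventually (eventually_le_nhds (half_pos hw)))
  obtain ⟨n, hwit, hn, hhalf⟩ := (hfreq.and_eventually hev).exists
  rw [← Nat.div_div_eq_div_mul] at hwit hhalf
  set q' := n / (k + 1)
  have hq' : q + 2 ≤ q' := (Nat.le_div_iff_mul_le k.succ_pos).2 hn
  refine ⟨q', q' / L, by omega, Nat.div_le_self _ _, hhalf, ?_, n, rfl, hwit⟩
  refine hatLine_le_hatLine hξ hξ0 (Nat.cast_nonneg _) hhalf ?_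
  have h₁ : ((q' / L : ℕ) : ℝ) * L ≤ q' := by exact_mod_cast Nat.div_mul_le_self q' L
  have h₂ : (q' : ℝ) ≤ 2 * ((q' - 1 : ℕ) : ℝ) := by
    rw [Nat.cast_sub (by omega)]
    have : (2 : ℝ) ≤ q' := by exact_mod_cast (show 2 ≤ q' by omega)
    push_cast
    linarith
  nlinarith [mul_le_mul_of_nonneg_left hL (Nat.cast_nonneg (q' / L) : (0 : ℝ) ≤ _)]

/-- The data of a step function equal to `ξ̂ (level k)` on `[start k, start (k+1))`. -/
structure Plateaus (ξ ρ : ℕ → ℝ) where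
  start : ℕ → ℕ
  level : ℕ → ℕ
  start_zero : start 0 = 0
  level_zero : level 0 = 0
  start_lt_succ : ∀ k, start k < start (k + 1)
  level_le_start : ∀ k, level k ≤ start k
  hatSeq_level_succ_le : ∀ k, hatSeq ξ (level (k + 1)) ≤ hatSeq ξ (level k) / 2
  hatLine_level_succ_le : ∀ k,
    hatLine ξ (level (k + 1)) ↑(start (k + 1) - 1) ≤ hatLine ξ (level k) ↑(start (k + 1) - 1)
  exists_lt : ∀ k, ∃ n, n / (k + 1) = start (k + 1) ∧ (k + 1) * hatSeq ξ (level (k + 1)) < ρ n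

theorem nonempty_plateaus {ξ ρ : ℕ → ℝ} (hξ : Antitone ξ) (hξ0 : ∀ n, 0 ≤ ξ n)
    (hns : ¬ Summable ξ) (hlim : Tendsto ξ atTop (nhds 0))
    (hρ : ¬ ∃ m : ℕ, 0 < m ∧ ∃ C : ℝ, 0 < C ∧ ∀ n, ρ n ≤ C * hatSeq ξ (n / m)) :
    Nonempty (Plateaus ξ ρ) := by
  choose q' p' hlt hle hhalf hline hwit using exists_next_plateau hξ hξ0 hns hlim hρ
  let s : ℕ → ℕ × ℕ := fun k => Nat.rec (0, 0) (fun k s => (q' k s.1 s.2, p' k s.1 s.2)) k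
  exact ⟨{
    start := fun k => (s k).1
    level := fun k => (s k).2
    start_zero := rfl
    level_zero := rfl
    start_lt_succ := fun k => hlt k _ _
    level_le_start := fun k => k.casesOn le_rfl fun k => hle k _ _
    hatSeq_level_succ_le := fun k => hhalf k _ _
    hatLine_level_succ_le := fun k => hline k _ _
    exists_lt := fun k => hwit k _ _ }⟩

namespace Plateaus

variable {ξ ρ : ℕ → ℝ} (P : Plateaus ξ ρ)

noncomputable def seq (n : ℕ) : ℝ := hatSeq ξ (P.level (plateauIndex P.start n))

theorem start_strictMono : StrictMono P.start := strictMono_nat_of_lt_succ P.start_lt_succ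

theorem seq_start (k : ℕ) : P.seq (P.start k) = hatSeq ξ (P.level k) := by
  rw [seq, plateauIndex_start P.start_strictMono P.start_zero]

theorem antitone_hatSeq_level (hξ0 : ∀ n, 0 ≤ ξ n) : Antitone fun k => hatSeq ξ (P.level k) :=
  antitone_nat_of_succ_le fun k =>
    (P.hatSeq_level_succ_le k).trans (half_le_self (hatSeq_nonneg hξ0 _))

theorem tendsto_hatSeq_level (hξ0 : ∀ n, 0 ≤ ξ n) :
    Tendsto (fun k => hatSeq ξ (P.level k)) atTop (nhds 0) := by
  refine (summable_of_ratio_norm_eventually_le (r := 1 / 2) (by norm_num)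
    (Eventually.of_forall fun k => ?_)).tendsto_atTop_zero
  rw [Real.norm_of_nonneg (hatSeq_nonneg hξ0 _), Real.norm_of_nonneg (hatSeq_nonneg hξ0 _)]
  linarith [P.hatSeq_level_succ_le k]

theorem seq_antitone (hξ0 : ∀ n, 0 ≤ ξ n) : Antitone P.seq :=
  (P.antitone_hatSeq_level hξ0).comp_monotone plateauIndex_mono

theorem isC0Star_seq (hξ0 : ∀ n, 0 ≤ ξ n) : IsC0Star P.seq :=
  ⟨fun _ => hatSeq_nonneg hξ0 _, fun n => P.seq_antitone hξ0 n.le_succ,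
    (P.tendsto_hatSeq_level hξ0).comp (tendsto_plateauIndex P.start_strictMono)⟩

theorem hatLine_le_partialSum_seq (n : ℕ) :
    hatLine ξ (P.level (plateauIndex P.start n)) n ≤ partialSum P.seq n := by
  have hQ := P.start_strictMono
  induction n with
  | zero =>
    have h0 : plateauIndex P.start 0 = 0 :=
      plateauIndex_eq hQ P.start_zero P.start_zero.le (by simpa [P.start_zero] using P.start_lt_succ 0)
    simp [hatLine, partialSum, seq, h0, P.level_zero, hatSeq_zero]
  | succ n ih =>
    rw [partialSum_succ, Nat.cast_succ, hatLine_add_one, seq]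
    rcases plateauIndex_succ hQ P.start_zero n with h | ⟨h, hstart⟩
    · rw [h]
      linarith
    · have := P.hatLine_level_succ_le (plateauIndex P.start n)
      rw [hstart, Nat.add_sub_cancel] at this
      rw [h]
      linarith

theorem am_le_am_seq (hξ : Antitone ξ) (hξ0 : ∀ n, 0 ≤ ξ n) (n : ℕ) : am ξ n ≤ am P.seq n :=
  am_le_am_iff.2 <| (partialSum_le_hatLine hξ hξ0 <| (P.level_le_start _).trans <|
    start_plateauIndex_le P.start_zero n).trans (P.hatLine_le_partialSum_seq n)

theorem not_dominated_seq (hξ0 : ∀ n, 0 ≤ ξ n) :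
    ¬ ∃ m : ℕ, 0 < m ∧ ∃ C : ℝ, 0 < C ∧ ∀ n, ρ n ≤ C * P.seq (n / m) := by
  rintro ⟨m, hm, C, hC, hle⟩
  set k := max m ⌈C⌉₊
  obtain ⟨n, hn, hlt⟩ := P.exists_lt k
  have hCk : C ≤ k + 1 :=
    (Nat.le_ceil C).trans (by exact_mod_cast (le_max_right m _).trans k.le_succ)
  have hseq : P.seq (n / m) ≤ hatSeq ξ (P.level (k + 1)) := by
    rw [← P.seq_start, ← hn]
    exact P.seq_antitone hξ0 (Nat.div_le_div_left (by omega) hm)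
  have := mul_le_mul hCk hseq (hatSeq_nonneg hξ0 _) (by positivity)
  linarith [hle n]

end Plateaus

theorem stmt_6 (ξ : ℕ → ℝ) (hξ : IsC0Star ξ) (hns : ¬ Summable ξ) :
    (∀ η : ℕ → ℝ, IsC0Star η → (∀ n, am ξ n ≤ am η n) →
      ∀ ε : ℝ, 0 < ε → ∃ N : ℕ, ∀ n, N ≤ n → (1 - ε) * hatSeq ξ n ≤ η n) ∧
    (∀ ρ : ℕ → ℝ, IsC0Star ρ →
      (¬ ∃ m : ℕ, 0 < m ∧ ∃ C : ℝ, 0 < C ∧ ∀ n, ρ n ≤ C * hatSeq ξ (n / m)) →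
      ∃ η : ℕ → ℝ, IsC0Star η ∧ (∀ n, am ξ n ≤ am η n) ∧
        ¬ ∃ m : ℕ, 0 < m ∧ ∃ C : ℝ, 0 < C ∧ ∀ n, ρ n ≤ C * η (n / m)) := by
  obtain ⟨hξ0, hξsucc, hlim⟩ := hξ
  have hanti : Antitone ξ := antitone_nat_of_succ_le hξsucc
  refine ⟨fun η hη hdom ε hε => eventually_one_sub_mul_hatSeq_le hanti hξ0 hns hη hdom hε,
    fun ρ _ hρ => ?_⟩
  obtain ⟨P⟩ := nonempty_plateaus hanti hξ0 hns hlim hρ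
  exact ⟨P.seq, P.isC0Star_seq hξ0, P.am_le_am_seq hanti hξ0, P.not_dominated_seq hξ0⟩
end

section
/- (i) Let 0 < p < 1, let ξ be the sequence ξ_n = n^{−p}, and let p' := p/(1 − p) (so that 1/p − 1/p' = 1). Then ξ̂ ≍ ⟨n^{−p'}⟩, i.e., there exist constants c, C > 0 with c·n^{−p'} ≤ ξ̂_n ≤ C·n^{−p'} for all n. (ii) For the harmonic sequence ω, ω_n = 1/n, one has ω̂ ≍ ⟨n·e^{−n}⟩, i.e., there exist c, C > 0 with c·n·e^{−n} ≤ ω̂_n ≤ C·n·e^{−n} for all n. -/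
/-!
Write `S k = ∑_{i<k} ξ i` and `ν = nuIdx ξ n`. Minimality of `ν` traps `S (ν+1)` between
`(n+1) ξ₀` and `(n+2) ξ₀`, so `hatSeq ξ n = S (ν+1) / (ν+1) ≍ (n+1) / (ν+1)`, and it remains to
invert the growth of `S`: `S k ≍ k^{1-p}` gives `ν + 1 ≍ n^{1/(1-p)}`, while
`log (k+1) ≤ S k ≤ 1 + log k` gives `eⁿ ≤ ν + 1 ≤ eⁿ⁺¹`.
-/

open Finset Filter Real

section nuIdx

variable {ξ : ℕ → ℝ}

theorem le_sum_range_nuIdx_succ (hξ : Tendsto (fun k => ∑ i ∈ range k, ξ i) atTop atTop)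
    (n : ℕ) : (n + 1 : ℝ) * ξ 0 ≤ ∑ i ∈ range (nuIdx ξ n + 1), ξ i := by
  obtain ⟨k, hk⟩ := eventually_atTop.mp (hξ.eventually_ge_atTop ((n + 1 : ℝ) * ξ 0))
  exact Nat.sInf_mem (s := {k : ℕ | (n + 1 : ℝ) * ξ 0 ≤ ∑ i ∈ range (k + 1), ξ i})
    ⟨k, hk (k + 1) k.le_succ⟩

theorem sum_range_nuIdx_lt (hξ0 : 0 < ξ 0) (n : ℕ) :
    ∑ i ∈ range (nuIdx ξ n), ξ i < (n + 1) * ξ 0 := by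
  cases hν : nuIdx ξ n with
  | zero => rw [sum_range_zero]; positivity
  | succ m => exact not_le.mp (Nat.notMem_of_lt_sInf (hν ▸ m.lt_succ_self : m < nuIdx ξ n))

theorem div_nuIdx_le_hatSeq (hξ : Tendsto (fun k => ∑ i ∈ range k, ξ i) atTop atTop)
    (n : ℕ) : (n + 1) * ξ 0 / (nuIdx ξ n + 1) ≤ hatSeq ξ n :=
  div_le_div_of_nonneg_right (le_sum_range_nuIdx_succ hξ n) (by positivity)

theorem hatSeq_le_two_mul_div_nuIdx (hξ0 : 0 < ξ 0) (hle : ∀ i, ξ i ≤ ξ 0) (n : ℕ) :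
    hatSeq ξ n ≤ 2 * ((n + 1) * ξ 0) / (nuIdx ξ n + 1) := by
  have hS := sum_range_nuIdx_lt hξ0 n
  have hn : (0 : ℝ) ≤ n * ξ 0 := by positivity
  unfold hatSeq am
  gcongr
  rw [sum_range_succ]
  linarith [hle (nuIdx ξ n)]

theorem exists_hatSeq_bounds_of_nuIdx_bounds
    (hξ : Tendsto (fun k => ∑ i ∈ range k, ξ i) atTop atTop) (hξ0 : 0 < ξ 0)
    (hle : ∀ i, ξ i ≤ ξ 0) {g : ℕ → ℝ} {a b : ℝ} (ha : 0 < a) (hb : 0 < b)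
    (hlow : ∀ n, a * g n ≤ nuIdx ξ n + 1) (hup : ∀ n, (nuIdx ξ n + 1 : ℝ) ≤ b * g n) :
    ∃ c C : ℝ, 0 < c ∧ 0 < C ∧ ∀ n : ℕ,
      c * ((n + 1) / g n) ≤ hatSeq ξ n ∧ hatSeq ξ n ≤ C * ((n + 1) / g n) := by
  refine ⟨ξ 0 / b, 2 * ξ 0 / a, by positivity, by positivity, fun n => ⟨?_, ?_⟩⟩
  · have hbg : 0 < b * g n := by linarith [hup n]
    calc ξ 0 / b * ((n + 1) / g n) = (n + 1) * ξ 0 / (b * g n) := by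
          field_simp [(pos_of_mul_pos_right hbg hb.le).ne']
      _ ≤ (n + 1) * ξ 0 / (nuIdx ξ n + 1) := by gcongr; exact hup n
      _ ≤ hatSeq ξ n := div_nuIdx_le_hatSeq hξ n
  · have hg : 0 < g n := pos_of_mul_pos_right (by linarith [hup n]) hb.le
    calc hatSeq ξ n ≤ 2 * ((n + 1) * ξ 0) / (nuIdx ξ n + 1) :=
          hatSeq_le_two_mul_div_nuIdx hξ0 hle n
      _ ≤ 2 * ((n + 1) * ξ 0) / (a * g n) := by gcongr; exact hlow n
      _ = 2 * ξ 0 / a * ((n + 1) / g n) := by field_simp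

end nuIdx

section PowerSums

variable {p : ℝ}

/-- Bernoulli's inequality `(x / (x+1)) ^ (1-p) ≤ 1 - (1-p) / (x+1)`, multiplied by
`(x+1) ^ (1-p)`. -/
theorem one_sub_mul_add_one_rpow_neg_le (hp0 : 0 ≤ p) (hp1 : p ≤ 1) {x : ℝ} (hx : 0 ≤ x) :
    (1 - p) * (x + 1) ^ (-p) ≤ (x + 1) ^ (1 - p) - x ^ (1 - p) := by
  have hx1 : 0 < x + 1 := by linarith
  have hB := rpow_one_add_le_one_add_mul_self (s := -(x + 1)⁻¹) (p := 1 - p)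
    (neg_le_neg (inv_le_one_of_one_le₀ (by linarith))) (by linarith) (by linarith)
  rw [show 1 + -(x + 1)⁻¹ = x / (x + 1) by field_simp; ring, div_rpow hx hx1.le,
    div_le_iff₀ (by positivity)] at hB
  rw [show -p = (1 - p) + -1 by ring, rpow_add hx1, rpow_neg_one]
  linear_combination hB

theorem one_sub_mul_sum_range_rpow_neg_le (hp0 : 0 ≤ p) (hp1 : p < 1) (m : ℕ) :
    (1 - p) * ∑ i ∈ range m, ((i : ℝ) + 1) ^ (-p) ≤ (m : ℝ) ^ (1 - p) := by
  calc (1 - p) * ∑ i ∈ range m, ((i : ℝ) + 1) ^ (-p)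
      ≤ ∑ i ∈ range m, (((i + 1 : ℕ) : ℝ) ^ (1 - p) - (i : ℝ) ^ (1 - p)) := by
        rw [mul_sum]
        gcongr with i
        push_cast
        exact one_sub_mul_add_one_rpow_neg_le hp0 hp1.le i.cast_nonneg
    _ = (m : ℝ) ^ (1 - p) := by
        rw [sum_range_sub (fun i : ℕ => (i : ℝ) ^ (1 - p))]
        simp [zero_rpow (by linarith : (1 : ℝ) - p ≠ 0)]

theorem rpow_one_sub_le_sum_range_rpow_neg (hp0 : 0 ≤ p) (hp1 : p < 1) (m : ℕ) :
    (m : ℝ) ^ (1 - p) ≤ ∑ i ∈ range m, ((i : ℝ) + 1) ^ (-p) := by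
  rcases m.eq_zero_or_pos with rfl | hm
  · simp [zero_rpow (by linarith : (1 : ℝ) - p ≠ 0)]
  have hm' : (0 : ℝ) < m := by exact_mod_cast hm
  calc (m : ℝ) ^ (1 - p) = #(range m) • (m : ℝ) ^ (-p) := by
        rw [card_range, nsmul_eq_mul, sub_eq_add_neg, rpow_add hm', rpow_one]
    _ ≤ ∑ i ∈ range m, ((i : ℝ) + 1) ^ (-p) := by
        refine card_nsmul_le_sum _ _ _ fun i hi => ?_
        refine rpow_le_rpow_of_nonpos (by positivity) ?_ (by linarith)
        exact_mod_cast mem_range.mp hi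

theorem tendsto_sum_range_rpow_neg (hp0 : 0 ≤ p) (hp1 : p < 1) :
    Tendsto (fun k => ∑ i ∈ range k, ((i : ℝ) + 1) ^ (-p)) atTop atTop :=
  tendsto_atTop_mono (rpow_one_sub_le_sum_range_rpow_neg hp0 hp1)
    ((tendsto_rpow_atTop (by linarith)).comp tendsto_natCast_atTop_atTop)

theorem nuIdx_rpow_neg_lt (hp0 : 0 ≤ p) (hp1 : p < 1) (n : ℕ) :
    (nuIdx (fun k => ((k : ℝ) + 1) ^ (-p)) n : ℝ) < ((n : ℝ) + 1) ^ (1 - p)⁻¹ := by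
  rw [lt_rpow_inv_iff_of_pos (by positivity) (by positivity) (by linarith)]
  calc _ ≤ _ := rpow_one_sub_le_sum_range_rpow_neg hp0 hp1 _
    _ < _ := sum_range_nuIdx_lt (by simp) n
    _ = (n : ℝ) + 1 := by simp

theorem mul_rpow_inv_le_nuIdx_rpow_neg (hp0 : 0 ≤ p) (hp1 : p < 1) (n : ℕ) :
    (1 - p) ^ (1 - p)⁻¹ * ((n : ℝ) + 1) ^ (1 - p)⁻¹ ≤
      (nuIdx (fun k => ((k : ℝ) + 1) ^ (-p)) n : ℝ) + 1 := by
  have h1p : 0 < 1 - p := by linarith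
  have hS := le_sum_range_nuIdx_succ (tendsto_sum_range_rpow_neg hp0 hp1) n
  have hU := one_sub_mul_sum_range_rpow_neg_le hp0 hp1
    (nuIdx (fun k => ((k : ℝ) + 1) ^ (-p)) n + 1)
  rw [← mul_rpow h1p.le (by positivity),
    rpow_inv_le_iff_of_pos (by positivity) (by positivity) h1p]
  push_cast at hS hU
  calc (1 - p) * ((n : ℝ) + 1) = (1 - p) * ((n + 1) * ((0 : ℝ) + 1) ^ (-p)) := by simp
    _ ≤ _ := mul_le_mul_of_nonneg_left hS h1p.le
    _ ≤ _ := hU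

end PowerSums

section HarmonicSums

theorem sum_range_one_div_eq_harmonic (m : ℕ) :
    ∑ i ∈ range m, 1 / ((i : ℝ) + 1) = harmonic m := by
  simp [harmonic]

theorem exp_le_nuIdx_one_div (n : ℕ) :
    exp n ≤ (nuIdx (fun k => 1 / ((k : ℝ) + 1)) n : ℝ) + 1 := by
  have hS := le_sum_range_nuIdx_succ tendsto_sum_range_one_div_nat_succ_atTop n
  rw [sum_range_one_div_eq_harmonic] at hS
  have hH := harmonic_le_one_add_log (nuIdx (fun k => 1 / ((k : ℝ) + 1)) n + 1)
  push_cast at hS hH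
  rw [← le_log_iff_exp_le (by positivity)]
  linarith

theorem nuIdx_one_div_lt_exp (n : ℕ) :
    (nuIdx (fun k => 1 / ((k : ℝ) + 1)) n : ℝ) + 1 < exp ((n : ℝ) + 1) := by
  have hS := sum_range_nuIdx_lt (ξ := fun k => 1 / ((k : ℝ) + 1)) (by simp) n
  rw [sum_range_one_div_eq_harmonic] at hS
  have hH := log_add_one_le_harmonic (nuIdx (fun k => 1 / ((k : ℝ) + 1)) n)
  push_cast at hS hH
  rw [← log_lt_iff_lt_exp (by positivity)]
  linarith

end HarmonicSums

theorem stmt_7 :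
    (∀ p : ℝ, 0 < p → p < 1 →
      ∃ c C : ℝ, 0 < c ∧ 0 < C ∧ ∀ n : ℕ,
        c * (n + 1 : ℝ) ^ (-(p / (1 - p))) ≤ hatSeq (fun k => (k + 1 : ℝ) ^ (-p)) n ∧
        hatSeq (fun k => (k + 1 : ℝ) ^ (-p)) n ≤ C * (n + 1 : ℝ) ^ (-(p / (1 - p)))) ∧
    (∃ c C : ℝ, 0 < c ∧ 0 < C ∧ ∀ n : ℕ,
      c * ((n + 1 : ℝ) * Real.exp (-(n + 1 : ℝ))) ≤ hatSeq (fun k => 1 / (k + 1 : ℝ)) n ∧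
      hatSeq (fun k => 1 / (k + 1 : ℝ)) n ≤ C * ((n + 1 : ℝ) * Real.exp (-(n + 1 : ℝ)))) := by
  refine ⟨fun p hp0 hp1 => ?_, ?_⟩
  · have h1p : 0 < 1 - p := by linarith
    have hpow (n : ℕ) :
        ((n : ℝ) + 1) ^ (-(p / (1 - p))) = (n + 1) / ((n : ℝ) + 1) ^ (1 - p)⁻¹ := by
      rw [show -(p / (1 - p)) = 1 - (1 - p)⁻¹ by field_simp; ring, rpow_sub (by positivity),
        rpow_one]
    simp only [hpow]
    refine exists_hatSeq_bounds_of_nuIdx_bounds (tendsto_sum_range_rpow_neg hp0.le hp1) (by simp)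
      (fun i => ?_) (by positivity) two_pos (mul_rpow_inv_le_nuIdx_rpow_neg hp0.le hp1) fun n => ?_
    · simpa using rpow_le_one_of_one_le_of_nonpos (by simp) (neg_nonpos.mpr hp0.le)
    · have := one_le_rpow (by simp : (1 : ℝ) ≤ n + 1) (inv_nonneg.mpr h1p.le)
      linarith [nuIdx_rpow_neg_lt hp0.le hp1 n]
  · simp only [exp_neg, ← div_eq_mul_inv]
    refine exists_hatSeq_bounds_of_nuIdx_bounds tendsto_sum_range_one_div_nat_succ_atTop (by simp)
      (fun i => ?_) (exp_pos (-1)) one_pos (fun n => ?_) fun n => ?_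
    · simpa using inv_le_one_of_one_le₀ (by simp : (1 : ℝ) ≤ i + 1)
    · rw [← exp_add, neg_add_cancel_comm_assoc]
      exact exp_le_nuIdx_one_div n
    · rw [one_mul]
      exact (nuIdx_one_div_lt_exp n).le
end

section
/- Let ξ ∈ c₀* be nonsummable and suppose the principal ideals generated by ξ and by ξ̂ coincide, i.e., there exist m ∈ ℕ and C > 0 such that ξ̂_n ≤ C·ξ_{⌈n/m⌉} and ξ_n ≤ C·ξ̂_{⌈n/m⌉} for all n. Then (ξ) = (ξ)_a, i.e., there exist m' ∈ ℕ and C' > 0 with (ξ_a)_n ≤ C'·ξ_{⌈n/m'⌉} for all n (so ξ is regular). -/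
/-!
It suffices to bound `(ξ_a)_b ≤ K ξ_b` for all large `b`: the finitely many remaining `b` are
absorbed into the constant because `ξ > 0`, and then `m' = 1` works. Given `b`, choose
`q ≈ 2 ∑_{i ≤ b} ξ_i / ξ₀`. Then `ν(ξ)_q` lies so far beyond `b` that `ξ̂_q ≤ 2 ξ_b`, so the
hypothesis gives `ξ_{mq} ≤ 2C ξ_b`. Because `ξ_a → 0`, the first `mq` terms carry at most half
of the mass `∑_{i ≤ b} ξ_i` once `b` is large; the other half is spread over at most `b + 1`
terms, each at most `ξ_{mq}`. Hence `(ξ_a)_b ≤ 4C ξ_b`.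
-/

open Finset Filter Topology

section Sequences

variable {ξ : ℕ → ℝ}

theorem Antitone.sum_range_le_add_mul (hanti : Antitone ξ) (h0 : ∀ n, 0 ≤ ξ n) (k l : ℕ) :
    ∑ i ∈ range l, ξ i ≤ ∑ i ∈ range k, ξ i + (l - k : ℕ) * ξ k :=
  calc ∑ i ∈ range l, ξ i ≤ ∑ i ∈ range (k + (l - k)), ξ i :=
        sum_le_sum_of_subset_of_nonneg (range_subset_range.2 (by omega)) fun i _ _ => h0 i
    _ = ∑ i ∈ range k, ξ i + ∑ j ∈ range (l - k), ξ (k + j) := sum_range_add ..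
    _ ≤ ∑ i ∈ range k, ξ i + (l - k : ℕ) * ξ k := by
        gcongr
        simpa using sum_le_card_nsmul (range (l - k)) _ (ξ k) fun j _ => hanti (by omega)

theorem Antitone.pos_of_not_summable (hanti : Antitone ξ) (h0 : ∀ n, 0 ≤ ξ n)
    (hns : ¬ Summable ξ) (n : ℕ) : 0 < ξ n := by
  refine (h0 n).lt_of_ne fun hn => hns ?_
  refine summable_of_ne_finset_zero (s := range n) fun k hk => ?_
  exact le_antisymm (hn ▸ hanti (by simpa using hk)) (h0 k)

theorem eventually_sum_range_le_mul {u : ℕ → ℝ} (hu : Tendsto u atTop (𝓝 0)) {ε : ℝ}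
    (hε : 0 < ε) : ∀ᶠ n in atTop, ∑ i ∈ range n, u i ≤ ε * n := by
  filter_upwards [hu.cesaro.eventually (gt_mem_nhds hε), eventually_gt_atTop 0] with n hn hn0
  rw [inv_mul_lt_iff₀ (by exact_mod_cast hn0)] at hn
  linarith

theorem exists_pos_forall_le_mul_of_eventually {f g : ℕ → ℝ} (hf : ∀ n, 0 ≤ f n)
    (hg : ∀ n, 0 < g n) {K : ℝ} (h : ∀ᶠ n in atTop, f n ≤ K * g n) :
    ∃ K' > 0, ∀ n, f n ≤ K' * g n := by
  have hO : f =O[cofinite] g := by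
    rw [Nat.cofinite_eq_atTop]
    refine Asymptotics.IsBigO.of_bound K (h.mono fun n hn => ?_)
    rwa [Real.norm_of_nonneg (hf n), Real.norm_of_nonneg (hg n).le]
  obtain ⟨K', hK', hbound⟩ := Asymptotics.bound_of_isBigO_cofinite hO
  refine ⟨K', hK', fun n => ?_⟩
  simpa [Real.norm_of_nonneg (hf n), Real.norm_of_nonneg (hg n).le] using hbound (hg n).ne'

theorem le_sum_range_nuIdx (h0 : ∀ n, 0 ≤ ξ n) (hns : ¬ Summable ξ) (q : ℕ) :
    (q + 1 : ℝ) * ξ 0 ≤ ∑ i ∈ range (nuIdx ξ q + 1), ξ i := by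
  have hmass := (not_summable_iff_tendsto_nat_atTop_of_nonneg h0).1 hns
  obtain ⟨k, hk⟩ := (hmass.eventually_ge_atTop ((q + 1 : ℝ) * ξ 0)).exists_forall_of_atTop
  exact Nat.sInf_mem (s := {k : ℕ | (q + 1 : ℝ) * ξ 0 ≤ ∑ i ∈ range (k + 1), ξ i})
    ⟨k, hk (k + 1) k.le_succ⟩

theorem hatSeq_le_two_mul (hanti : Antitone ξ) (h0 : ∀ n, 0 ≤ ξ n) (hns : ¬ Summable ξ)
    {b q : ℕ} (hq : 2 * ∑ i ∈ range (b + 1), ξ i ≤ (q + 1 : ℝ) * ξ 0) :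
    hatSeq ξ q ≤ 2 * ξ b := by
  set ν := nuIdx ξ q
  have hν := le_sum_range_nuIdx h0 hns q
  have hsplit := hanti.sum_range_le_add_mul h0 (b + 1) (ν + 1)
  have hlen : ((ν + 1 - (b + 1) : ℕ) : ℝ) * ξ (b + 1) ≤ (ν + 1) * ξ b := by
    gcongr
    · exact h0 _
    · exact_mod_cast Nat.sub_le _ _
    · exact hanti b.le_succ
  rw [hatSeq, am, div_le_iff₀ (by positivity)]
  linarith

theorem Antitone.am_le_of_sum_range_le_half (hanti : Antitone ξ) (h0 : ∀ n, 0 ≤ ξ n)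
    {t b : ℕ} {A : ℝ} (ht : ∑ i ∈ range t, ξ i ≤ (∑ i ∈ range (b + 1), ξ i) / 2)
    (hA : ξ t ≤ A * ξ b) : am ξ b ≤ 2 * A * ξ b := by
  have hsplit := hanti.sum_range_le_add_mul h0 t (b + 1)
  have hlen : ((b + 1 - t : ℕ) : ℝ) * ξ t ≤ (b + 1) * (A * ξ b) := by
    gcongr
    · exact h0 _
    · exact_mod_cast Nat.sub_le _ _
  rw [am, div_le_iff₀ (by positivity)]
  linarith

theorem eventually_am_le_mul_of_le_mul_hatSeq (hanti : Antitone ξ)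
    (h0 : ∀ n, 0 ≤ ξ n) (hlim : Tendsto ξ atTop (𝓝 0)) (hns : ¬ Summable ξ) {m : ℕ}
    (hm : 0 < m) {C : ℝ} (hC : 0 ≤ C) (hB : ∀ n, ξ n ≤ C * hatSeq ξ (n / m)) :
    ∀ᶠ b in atTop, am ξ b ≤ 4 * C * ξ b := by
  have hξ0 : 0 < ξ 0 := hanti.pos_of_not_summable h0 hns 0
  have hm' : (0 : ℝ) < m := by exact_mod_cast hm
  set S : ℕ → ℝ := fun k => ∑ i ∈ range k, ξ i
  have hmass : Tendsto S atTop atTop := (not_summable_iff_tendsto_nat_atTop_of_nonneg h0).1 hns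
  set q : ℕ → ℕ := fun b => ⌈2 * S (b + 1) / ξ 0⌉₊
  have hq : Tendsto q atTop atTop := tendsto_nat_ceil_atTop.comp <|
    ((hmass.comp (tendsto_add_atTop_nat 1)).const_mul_atTop two_pos).atTop_div_const hξ0
  have ht : Tendsto (fun b => m * q b) atTop atTop :=
    tendsto_atTop_mono (fun b => Nat.le_mul_of_pos_left _ hm) hq
  filter_upwards [ht.eventually (eventually_sum_range_le_mul hlim
    (by positivity : 0 < ξ 0 / (6 * m)))] with b hsmall
  have hξ0_le : ξ 0 ≤ S (b + 1) :=
    single_le_sum (fun i _ => h0 i) (mem_range.2 b.succ_pos)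
  have hq_ge : 2 * S (b + 1) ≤ q b * ξ 0 := (div_le_iff₀ hξ0).1 (Nat.le_ceil _)
  have hq_lt : (q b - 1 : ℝ) * ξ 0 < 2 * S (b + 1) := by
    rw [← lt_div_iff₀ hξ0, sub_lt_iff_lt_add]
    exact Nat.ceil_lt_add_one (div_nonneg (by linarith) hξ0.le)
  have hprobe : ξ (m * q b) ≤ 2 * C * ξ b :=
    calc ξ (m * q b) ≤ C * hatSeq ξ (q b) := by
          simpa [Nat.mul_div_cancel_left _ hm] using hB (m * q b)
      _ ≤ C * (2 * ξ b) :=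
          mul_le_mul_of_nonneg_left (hatSeq_le_two_mul hanti h0 hns (by linarith)) hC
      _ = 2 * C * ξ b := by ring
  refine (hanti.am_le_of_sum_range_le_half h0 ?_ hprobe).trans_eq (by ring)
  calc S (m * q b) ≤ ξ 0 / (6 * m) * (m * q b) := by exact_mod_cast hsmall
    _ = q b * ξ 0 / 6 := by field_simp
    _ ≤ S (b + 1) / 2 := by linarith

end Sequences

theorem stmt_8 (ξ : ℕ → ℝ) (hξ : IsC0Star ξ) (hns : ¬ Summable ξ)
    (h : ∃ m : ℕ, 0 < m ∧ ∃ C : ℝ, 0 < C ∧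
      (∀ n, hatSeq ξ n ≤ C * ξ (n / m)) ∧ (∀ n, ξ n ≤ C * hatSeq ξ (n / m))) :
    ∃ m' : ℕ, 0 < m' ∧ ∃ C' : ℝ, 0 < C' ∧ ∀ n, am ξ n ≤ C' * ξ (n / m') := by
  obtain ⟨h0, hsucc, hlim⟩ := hξ
  have hanti : Antitone ξ := antitone_nat_of_succ_le hsucc
  obtain ⟨m, hm, C, hC, -, hB⟩ := h
  obtain ⟨C', hC', hbound⟩ := exists_pos_forall_le_mul_of_eventually
    (fun n => div_nonneg (sum_nonneg fun i _ => h0 i) (by positivity))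
    (hanti.pos_of_not_summable h0 hns)
    (eventually_am_le_mul_of_le_mul_hatSeq hanti h0 hlim hns hm hC.le hB)
  exact ⟨1, one_pos, C', hC', fun n => by rw [Nat.div_one]; exact hbound n⟩
end

section
/- There exist ξ, η ∈ c₀* with ξ_n ≤ η_n for all n such that η_{a²} = O(ξ_{a²}) (hence ξ_{a²} ≍ η_{a²}), but η_a ≠ O(ξ_a), i.e., for every C > 0 there is some n with (η_a)_n > C·(ξ_a)_n. (Consequently there are principal ideals J ⊂ I with J_{a²} = I_{a²} but J_a ≠ I_a, answering a question of Wodzicki in the negative.) -/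
open Finset Filter Topology

lemma am_nonneg_s9 {φ : ℕ → ℝ} (hφ : ∀ i, 0 ≤ φ i) (n : ℕ) : 0 ≤ am φ n :=
  div_nonneg (sum_nonneg fun i _ => hφ i) (by positivity)

section DyadicStep

def dyadicStep (v : ℕ → ℝ) (n : ℕ) : ℝ := v (Nat.log 2 (n + 1))

def blockSum (v : ℕ → ℝ) (p : ℕ) : ℝ := ∑ j ∈ range p, 2 ^ j * v j

lemma log_two_eq_of_mem_Ico {i j : ℕ} (h : i ∈ Ico (2 ^ j - 1) (2 ^ (j + 1) - 1)) :
    Nat.log 2 (i + 1) = j := by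
  rw [mem_Ico] at h
  have := Nat.one_le_two_pow (n := j)
  exact Nat.log_eq_of_pow_le_of_lt_pow (by omega) (by omega)

theorem sum_range_two_pow_sub_one_comp_log {M : Type*} [AddCommMonoid M] (g : ℕ → M) (p : ℕ) :
    ∑ i ∈ range (2 ^ p - 1), g (Nat.log 2 (i + 1)) = ∑ j ∈ range p, 2 ^ j • g j := by
  induction p with
  | zero => simp
  | succ p ih =>
    have h := Nat.one_le_two_pow (n := p)
    rw [← sum_range_add_sum_Ico _ (m := 2 ^ p - 1) (by rw [pow_succ]; omega), ih, sum_range_succ,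
      sum_congr rfl fun i hi => congrArg g (log_two_eq_of_mem_Ico hi), sum_const, Nat.card_Ico]
    congr 2
    rw [pow_succ]
    omega

variable {v w : ℕ → ℝ}

lemma sum_range_dyadicStep (v : ℕ → ℝ) (p : ℕ) :
    ∑ i ∈ range (2 ^ p - 1), dyadicStep v i = blockSum v p := by
  simp [dyadicStep, blockSum, sum_range_two_pow_sub_one_comp_log, nsmul_eq_mul]

lemma antitone_inv_two_pow {e : ℕ → ℕ} (he : Monotone e) :
    Antitone fun j => ((2 : ℝ) ^ e j)⁻¹ := fun _ _ h =>
  inv_anti₀ (by positivity) (pow_le_pow_right₀ one_le_two (he h))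

lemma tendsto_inv_two_pow {e : ℕ → ℕ} (he : Tendsto e atTop atTop) :
    Tendsto (fun j => ((2 : ℝ) ^ e j)⁻¹) atTop (𝓝 0) :=
  tendsto_inv_atTop_zero.comp ((tendsto_pow_atTop_atTop_of_one_lt one_lt_two).comp he)

lemma isC0Star_dyadicStep (hv₀ : ∀ j, 0 ≤ v j) (hv : Antitone v)
    (hlim : Tendsto v atTop (𝓝 0)) : IsC0Star (dyadicStep v) := by
  have hlog : Tendsto (fun n => Nat.log 2 (n + 1)) atTop atTop :=
    (Monotone.tendsto_atTop_atTop fun a b h => Nat.log_mono_right (by omega)) fun b =>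
      ⟨2 ^ b - 1, by rw [Nat.sub_add_cancel Nat.one_le_two_pow, Nat.log_pow one_lt_two]⟩
  exact ⟨fun n => hv₀ _, fun n => hv (Nat.log_mono_right (by omega)), hlim.comp hlog⟩

lemma blockSum_add_sum_Ico {l u : ℕ} (h : l ≤ u) :
    blockSum v l + ∑ j ∈ Ico l u, 2 ^ j * v j = blockSum v u :=
  sum_range_add_sum_Ico _ h

lemma blockSum_nonneg (hv : ∀ j, 0 ≤ v j) (p : ℕ) : 0 ≤ blockSum v p :=
  sum_nonneg fun j _ => mul_nonneg (by positivity) (hv j)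

lemma blockSum_mono (hv : ∀ j, 0 ≤ v j) : Monotone (blockSum v) := fun _ _ h =>
  sum_le_sum_of_subset_of_nonneg (range_subset_range.2 h) fun j _ _ =>
    mul_nonneg (by positivity) (hv j)

lemma blockSum_le_blockSum (h : ∀ j, v j ≤ w j) (p : ℕ) : blockSum v p ≤ blockSum w p :=
  sum_le_sum fun j _ => mul_le_mul_of_nonneg_left (h j) (by positivity)

lemma blockSum_sub_blockSum_eq_of_eqOn_Ico {l u : ℕ} (hlu : l ≤ u)
    (h : ∀ j ∈ Ico l u, v j = w j) :
    blockSum v u - blockSum w u = blockSum v l - blockSum w l := by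
  rw [← blockSum_add_sum_Ico (v := v) hlu, ← blockSum_add_sum_Ico (v := w) hlu,
    sum_congr rfl fun j hj => by rw [h j hj]]
  ring

lemma sum_Ico_two_pow_mul_inv {l u e m : ℕ} (hlu : l ≤ u) (hu : u = e + m) :
    ∑ j ∈ Ico l u, (2 : ℝ) ^ j * ((2 : ℝ) ^ e)⁻¹ = 2 ^ m - 2 ^ l / 2 ^ e := by
  rw [← sum_mul, geom_sum_Ico (by norm_num) hlu, hu, pow_add]
  field_simp
  ring

lemma blockSum_le_add_of_eqOn_Ico {l u e m : ℕ} (hlu : l ≤ u)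
    (hv : ∀ j ∈ Ico l u, v j = ((2 : ℝ) ^ e)⁻¹) (hu : u = e + m) :
    blockSum v u ≤ blockSum v l + 2 ^ m := by
  rw [← blockSum_add_sum_Ico hlu, sum_congr rfl fun j hj => by rw [hv j hj],
    sum_Ico_two_pow_mul_inv hlu hu]
  have : (0 : ℝ) ≤ 2 ^ l / 2 ^ e := by positivity
  linarith

lemma add_le_blockSum_of_eqOn_Ico {l u e m : ℕ} (hlu : l < u)
    (hv : ∀ j ∈ Ico l u, v j = ((2 : ℝ) ^ e)⁻¹) (hu : u = e + m) :
    blockSum v l + 2 ^ m / 2 ≤ blockSum v u := by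
  rw [← blockSum_add_sum_Ico hlu.le, sum_congr rfl fun j hj => by rw [hv j hj],
    sum_Ico_two_pow_mul_inv hlu.le hu]
  have hl : (2 : ℝ) ^ l * 2 ≤ 2 ^ e * 2 ^ m := by
    rw [← pow_succ, ← pow_add, ← hu]
    exact pow_le_pow_right₀ one_le_two hlu
  have : (2 : ℝ) ^ l / 2 ^ e ≤ 2 ^ m / 2 := by
    rw [div_le_div_iff₀ (by positivity) two_pos]
    linarith
  linarith

lemma blockSum_add_two_le (hv₀ : ∀ j, 0 ≤ v j) (hv : Antitone v) (j : ℕ) :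
    blockSum v (j + 2) ≤ 3 * blockSum v (j + 1) := by
  have h₁ : blockSum v (j + 1) = blockSum v j + 2 ^ j * v j := sum_range_succ _ _
  have h₂ : blockSum v (j + 2) = blockSum v (j + 1) + 2 ^ (j + 1) * v (j + 1) :=
    sum_range_succ _ _
  have h₃ : 2 ^ (j + 1) * v (j + 1) ≤ 2 * (2 ^ j * v j) := by
    rw [pow_succ]; nlinarith [hv j.le_succ, pow_pos (two_pos (α := ℝ)) j]
  nlinarith [blockSum_nonneg hv₀ j]

lemma sum_range_add_two_blockSum_le (hv₀ : ∀ j, 0 ≤ v j) (hv : Antitone v) (J : ℕ) :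
    ∑ j ∈ range (J + 2), blockSum v j ≤ 13 * ∑ j ∈ range J, blockSum v j + 4 * v 0 := by
  match J with
  | 0 => simp [sum_range_succ, blockSum]; linarith [hv₀ 0]
  | 1 => simp [sum_range_succ, blockSum]; nlinarith [hv zero_le_one, hv₀ 0]
  | J + 2 =>
    have h₁ := blockSum_add_two_le hv₀ hv J
    have h₂ := blockSum_add_two_le hv₀ hv (J + 1)
    have h₃ : blockSum v (J + 1) ≤ ∑ j ∈ range (J + 2), blockSum v j :=
      single_le_sum (fun j _ => blockSum_nonneg hv₀ j) (mem_range.2 (by omega))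
    rw [sum_range_succ, sum_range_succ]
    nlinarith [hv₀ 0]

lemma am_dyadicStep_le (hv : ∀ j, 0 ≤ v j) (i : ℕ) :
    am (dyadicStep v) i ≤ blockSum v (Nat.log 2 (i + 1) + 1) / 2 ^ Nat.log 2 (i + 1) := by
  set j := Nat.log 2 (i + 1)
  have hlow : 2 ^ j ≤ i + 1 := Nat.pow_log_le_self 2 (by omega)
  have hup : i + 1 < 2 ^ (j + 1) := Nat.lt_pow_succ_log_self one_lt_two _
  rw [am, ← sum_range_dyadicStep]
  refine div_le_div₀ (sum_nonneg fun _ _ => hv _)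
    (sum_le_sum_of_subset_of_nonneg (range_subset_range.2 (by omega)) fun _ _ _ => hv _)
    (by positivity) (by exact_mod_cast hlow)

lemma le_am_dyadicStep (hv : ∀ j, 0 ≤ v j) (i : ℕ) :
    blockSum v (Nat.log 2 (i + 1)) / 2 ^ (Nat.log 2 (i + 1) + 1) ≤ am (dyadicStep v) i := by
  set j := Nat.log 2 (i + 1)
  have hlow : 2 ^ j ≤ i + 1 := Nat.pow_log_le_self 2 (by omega)
  have hup : i + 1 < 2 ^ (j + 1) := Nat.lt_pow_succ_log_self one_lt_two _
  rw [am, ← sum_range_dyadicStep]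
  refine div_le_div₀ (sum_nonneg fun _ _ => hv _)
    (sum_le_sum_of_subset_of_nonneg (range_subset_range.2 (by omega)) fun _ _ _ => hv _)
    (by positivity) (by exact_mod_cast hup.le)

lemma sum_am_dyadicStep_le (hv : ∀ j, 0 ≤ v j) (n : ℕ) :
    ∑ i ∈ range (n + 1), am (dyadicStep v) i ≤
      ∑ j ∈ range (Nat.log 2 (n + 1) + 2), blockSum v j := by
  set J := Nat.log 2 (n + 1)
  have hup : n + 1 < 2 ^ (J + 1) := Nat.lt_pow_succ_log_self one_lt_two _
  let g : ℕ → ℝ := fun j => blockSum v (j + 1) / 2 ^ j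
  calc ∑ i ∈ range (n + 1), am (dyadicStep v) i
      ≤ ∑ i ∈ range (n + 1), g (Nat.log 2 (i + 1)) :=
        sum_le_sum fun i _ => am_dyadicStep_le hv i
    _ ≤ ∑ i ∈ range (2 ^ (J + 1) - 1), g (Nat.log 2 (i + 1)) :=
        sum_le_sum_of_subset_of_nonneg (range_subset_range.2 (by omega)) fun j _ _ =>
          div_nonneg (blockSum_nonneg hv _) (by positivity)
    _ = ∑ j ∈ range (J + 2), blockSum v j := by
        rw [sum_range_two_pow_sub_one_comp_log, sum_range_succ' (blockSum v)]
        simp [g, blockSum, nsmul_eq_mul, mul_div_cancel₀]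

lemma sum_blockSum_le_two_mul_sum_am (hv : ∀ j, 0 ≤ v j) (n : ℕ) :
    ∑ j ∈ range (Nat.log 2 (n + 1)), blockSum v j ≤
      2 * ∑ i ∈ range (n + 1), am (dyadicStep v) i := by
  set J := Nat.log 2 (n + 1)
  have hlow : 2 ^ J ≤ n + 1 := Nat.pow_log_le_self 2 (by omega)
  let g : ℕ → ℝ := fun j => blockSum v j / 2 ^ (j + 1)
  calc ∑ j ∈ range J, blockSum v j
      = 2 * ∑ i ∈ range (2 ^ J - 1), g (Nat.log 2 (i + 1)) := by
        rw [sum_range_two_pow_sub_one_comp_log, mul_sum]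
        refine sum_congr rfl fun j _ => ?_
        simp only [g, nsmul_eq_mul, Nat.cast_pow, Nat.cast_ofNat, pow_succ]
        field_simp
    _ ≤ 2 * ∑ i ∈ range (n + 1), g (Nat.log 2 (i + 1)) := by
        refine mul_le_mul_of_nonneg_left ?_ zero_le_two
        exact sum_le_sum_of_subset_of_nonneg (range_subset_range.2 (by omega)) fun j _ _ =>
          div_nonneg (blockSum_nonneg hv _) (by positivity)
    _ ≤ 2 * ∑ i ∈ range (n + 1), am (dyadicStep v) i := by
        gcongr with i
        exact le_am_dyadicStep hv i

theorem bigO_am_am_dyadicStep {C : ℝ} (hC : 0 < C) (hv₀ : ∀ j, 0 ≤ v j) (hv : Antitone v)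
    (hw₀ : ∀ j, 0 ≤ w j)
    (h : ∀ J, ∑ j ∈ range J, blockSum w j ≤ C * ∑ j ∈ range J, blockSum v j) :
    BigO (am (am (dyadicStep w))) (am (am (dyadicStep v))) := by
  refine ⟨30 * C, by positivity, fun n => ?_⟩
  have ham : ∀ φ, am (am φ) n = (∑ i ∈ range (n + 1), am φ i) / (n + 1) := fun _ => rfl
  have hv0 : v 0 ≤ ∑ i ∈ range (n + 1), am (dyadicStep v) i := by
    have : am (dyadicStep v) 0 = v 0 := by simp [am, dyadicStep]
    rw [← this]
    exact single_le_sum (f := fun i => am (dyadicStep v) i)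
      (fun i _ => am_nonneg_s9 (fun _ => hv₀ _) i) (mem_range.2 n.succ_pos)
  have key : ∑ i ∈ range (n + 1), am (dyadicStep w) i ≤
      30 * C * ∑ i ∈ range (n + 1), am (dyadicStep v) i := by
    have h₁ := sum_am_dyadicStep_le hw₀ n
    have h₂ := h (Nat.log 2 (n + 1) + 2)
    have h₃ := sum_range_add_two_blockSum_le hv₀ hv (Nat.log 2 (n + 1))
    have h₄ := sum_blockSum_le_two_mul_sum_am hv₀ n
    nlinarith
  rw [ham, ham, ← mul_div_assoc]
  gcongr

theorem not_bigO_am_dyadicStep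
    (h : ∀ C : ℝ, 0 < C → ∃ p, 0 < p ∧ C * blockSum v p < blockSum w p) :
    ¬ BigO (am (dyadicStep w)) (am (dyadicStep v)) := by
  rintro ⟨C, hC, hle⟩
  obtain ⟨p, hp, hlt⟩ := h C hC
  have hn : 2 ^ p - 2 + 1 = 2 ^ p - 1 := by
    have := Nat.one_lt_two_pow hp.ne'
    omega
  have := hle (2 ^ p - 2)
  rw [am, am, hn, sum_range_dyadicStep, sum_range_dyadicStep, mul_div_assoc',
    div_le_div_iff_of_pos_right (by positivity)] at this
  linarith

end DyadicStep

lemma sum_range_le_mul_sum_range_of_window_absorbed {A B : ℕ → ℝ} {c : ℝ} {p s J : ℕ}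
    (hc : 0 ≤ c) (hB : ∀ j, 0 ≤ B j) (hps : p ≤ s) (hpJ : p ≤ J)
    (h₀ : ∑ j ∈ range p, A j ≤ (c + 1) * ∑ j ∈ range p, B j)
    (hgood : ∀ j ∈ Ico p s, A j ≤ c * B j)
    (hwindow : s ≤ J → ∑ j ∈ Ico s J, A j ≤ ∑ j ∈ Ico p s, B j) :
    ∑ j ∈ range J, A j ≤ (c + 1) * ∑ j ∈ range J, B j := by
  rcases le_total J s with hJs | hsJ
  · have hA : ∑ j ∈ Ico p J, A j ≤ c * ∑ j ∈ Ico p J, B j := by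
      rw [mul_sum]
      exact sum_le_sum fun j hj => hgood j (Ico_subset_Ico_right hJs hj)
    have hB' : 0 ≤ ∑ j ∈ Ico p J, B j := sum_nonneg fun j _ => hB j
    rw [← sum_range_add_sum_Ico _ hpJ, ← sum_range_add_sum_Ico B hpJ]
    nlinarith
  · have hA : ∑ j ∈ Ico p s, A j ≤ c * ∑ j ∈ Ico p s, B j := by
      rw [mul_sum]
      exact sum_le_sum hgood
    have hB' : 0 ≤ ∑ j ∈ Ico s J, B j := sum_nonneg fun j _ => hB j
    rw [← sum_range_add_sum_Ico _ hsJ, ← sum_range_add_sum_Ico _ hps,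
      ← sum_range_add_sum_Ico B hsJ, ← sum_range_add_sum_Ico B hps]
    nlinarith [hwindow hsJ]

namespace Wodzicki

/- Stage `K` covers the dyadic levels `[stageStart K, stageStart (K + 1))`: a rest segment up to
`plateauStart K` with exponent `restExp K`, a plateau up to `dipStart K` with exponent
`plateauExp K`, and a dip of `K` levels on which `ξ` already has the next rest exponent
`restExp (K + 1)` while `η` keeps `plateauExp K`. Each segment ends at its exponent plus
`massExp (K + 1)` (plus `K` for `η` on the dip), so it adds a mass of order `2 ^ massExp (K + 1)`
(resp. `2 ^ (massExp (K + 1) + K)`). -/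

def plateauLen (K : ℕ) : ℕ := 2 ^ (2 * K + 8)

def restExp : ℕ → ℕ
  | 0 => 0
  | K + 1 => restExp K + plateauLen K + K

def massExp : ℕ → ℕ
  | 0 => 0
  | K + 1 => massExp K + K + 2

def plateauExp (K : ℕ) : ℕ := restExp K + plateauLen K

def stageStart (K : ℕ) : ℕ := restExp K + massExp K

def plateauStart (K : ℕ) : ℕ := restExp K + massExp (K + 1)

def dipStart (K : ℕ) : ℕ := plateauExp K + massExp (K + 1)

lemma plateauStart_eq (K : ℕ) : plateauStart K = stageStart K + (K + 2) := by
  simp only [plateauStart, stageStart, massExp]; omega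

lemma dipStart_eq (K : ℕ) : dipStart K = plateauStart K + plateauLen K := by
  simp only [dipStart, plateauStart, plateauExp]; omega

lemma stageStart_succ (K : ℕ) : stageStart (K + 1) = dipStart K + K := by
  simp only [stageStart, dipStart, plateauExp, restExp]; omega

lemma stageStart_lt_plateauStart (K : ℕ) : stageStart K < plateauStart K := by
  rw [plateauStart_eq]; omega

lemma plateauStart_le_dipStart (K : ℕ) : plateauStart K ≤ dipStart K := by
  rw [dipStart_eq]; omega

lemma dipStart_le_stageStart_succ (K : ℕ) : dipStart K ≤ stageStart (K + 1) := by
  rw [stageStart_succ]; omega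

lemma stageStart_strictMono : StrictMono stageStart :=
  strictMono_nat_of_lt_succ fun K => by
    rw [stageStart_succ, dipStart_eq, plateauStart_eq]
    omega

lemma exists_lt_stageStart_succ (j : ℕ) : ∃ K, j < stageStart (K + 1) :=
  ⟨j, Nat.lt_of_lt_of_le j.lt_succ_self stageStart_strictMono.le_apply⟩

def stage (j : ℕ) : ℕ := Nat.find (exists_lt_stageStart_succ j)

lemma lt_stageStart_stage_succ (j : ℕ) : j < stageStart (stage j + 1) :=
  Nat.find_spec (exists_lt_stageStart_succ j)

lemma stageStart_stage_le (j : ℕ) : stageStart (stage j) ≤ j := by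
  rcases h : stage j with _ | K
  · simp [stageStart, restExp, massExp]
  · exact not_lt.1 (Nat.find_min (exists_lt_stageStart_succ j) (show K < stage j by omega))

lemma stage_eq {K j : ℕ} (h₁ : stageStart K ≤ j) (h₂ : j < stageStart (K + 1)) :
    stage j = K :=
  (Nat.find_eq_iff _).2 ⟨h₂, fun _ hn =>
    not_lt.2 ((stageStart_strictMono.monotone (Nat.succ_le_of_lt hn)).trans h₁)⟩

lemma stage_mono : Monotone stage := fun j j' h => by
  by_contra! hlt
  have : stageStart (stage j' + 1) ≤ stageStart (stage j) :=
    stageStart_strictMono.monotone (by omega)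
  have := stageStart_stage_le j
  have := lt_stageStart_stage_succ j'
  omega

lemma restExp_mono : Monotone restExp :=
  monotone_nat_of_le_succ fun K => by simp only [restExp]; omega

lemma le_restExp (K : ℕ) : K ≤ restExp K := by
  induction K with
  | zero => exact le_rfl
  | succ K ih =>
    have : 1 ≤ plateauLen K := Nat.one_le_two_pow
    simp only [restExp]
    omega

lemma plateauExp_le_restExp_succ (K : ℕ) : plateauExp K ≤ restExp (K + 1) := by
  simp only [plateauExp, restExp]; omega

def etaExp (j : ℕ) : ℕ :=
  if j < plateauStart (stage j) then restExp (stage j) else plateauExp (stage j)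

def xiExp (j : ℕ) : ℕ :=
  if j < plateauStart (stage j) then restExp (stage j)
  else if j < dipStart (stage j) then plateauExp (stage j) else restExp (stage j + 1)

lemma etaExp_of_rest {K j : ℕ} (h₁ : stageStart K ≤ j) (h₂ : j < plateauStart K) :
    etaExp j = restExp K := by
  have := plateauStart_le_dipStart K
  have := dipStart_le_stageStart_succ K
  rw [etaExp, stage_eq h₁ (by omega), if_pos h₂]

lemma xiExp_of_rest {K j : ℕ} (h₁ : stageStart K ≤ j) (h₂ : j < plateauStart K) :
    xiExp j = restExp K := by
  have := plateauStart_le_dipStart K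
  have := dipStart_le_stageStart_succ K
  rw [xiExp, stage_eq h₁ (by omega), if_pos h₂]

lemma etaExp_of_plateau {K j : ℕ} (h₁ : plateauStart K ≤ j) (h₂ : j < stageStart (K + 1)) :
    etaExp j = plateauExp K := by
  have := stageStart_lt_plateauStart K
  rw [etaExp, stage_eq (by omega) h₂, if_neg (not_lt.2 h₁)]

lemma xiExp_of_plateau {K j : ℕ} (h₁ : plateauStart K ≤ j) (h₂ : j < dipStart K) :
    xiExp j = plateauExp K := by
  have := stageStart_lt_plateauStart K
  have := dipStart_le_stageStart_succ K
  rw [xiExp, stage_eq (K := K) (by omega) (by omega), if_neg (not_lt.2 h₁), if_pos h₂]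

lemma xiExp_of_dip {K j : ℕ} (h₁ : dipStart K ≤ j) (h₂ : j < stageStart (K + 1)) :
    xiExp j = restExp (K + 1) := by
  have := stageStart_lt_plateauStart K
  have := plateauStart_le_dipStart K
  rw [xiExp, stage_eq (K := K) (by omega) h₂, if_neg (by omega), if_neg (not_lt.2 h₁)]

lemma etaExp_eq_xiExp {K j : ℕ} (h₁ : stageStart K ≤ j) (h₂ : j < dipStart K) :
    etaExp j = xiExp j := by
  rcases lt_or_ge j (plateauStart K) with h | h
  · rw [etaExp_of_rest h₁ h, xiExp_of_rest h₁ h]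
  · rw [etaExp_of_plateau h (h₂.trans_le (dipStart_le_stageStart_succ K)),
      xiExp_of_plateau h h₂]

lemma monotone_of_stage {e : ℕ → ℕ} (hlow : ∀ j, restExp (stage j) ≤ e j)
    (hup : ∀ j, e j ≤ restExp (stage j + 1))
    (hstage : ∀ j j', j ≤ j' → stage j = stage j' → e j ≤ e j') : Monotone e := by
  intro j j' h
  rcases (stage_mono h).eq_or_lt with hs | hs
  · exact hstage j j' h hs
  · exact (hup j).trans ((restExp_mono hs).trans (hlow j'))

lemma etaExp_mono : Monotone etaExp := by
  refine monotone_of_stage (fun j => ?_) (fun j => ?_) fun j j' h hs => ?_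
  · unfold etaExp plateauExp; split_ifs <;> omega
  · have := plateauExp_le_restExp_succ (stage j)
    have := restExp_mono (stage j).le_succ
    unfold etaExp; split_ifs <;> omega
  · unfold etaExp; rw [hs]; unfold plateauExp; split_ifs <;> omega

lemma xiExp_mono : Monotone xiExp := by
  refine monotone_of_stage (fun j => ?_) (fun j => ?_) fun j j' h hs => ?_
  · have := restExp_mono (stage j).le_succ
    unfold xiExp plateauExp; split_ifs <;> omega
  · have := plateauExp_le_restExp_succ (stage j)
    have := restExp_mono (stage j).le_succ
    unfold xiExp; split_ifs <;> omega
  · have := plateauExp_le_restExp_succ (stage j')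
    unfold xiExp; rw [hs]; unfold plateauExp at *; split_ifs <;> omega

lemma etaExp_le_xiExp (j : ℕ) : etaExp j ≤ xiExp j := by
  have := plateauExp_le_restExp_succ (stage j)
  unfold etaExp xiExp; split_ifs <;> omega

lemma tendsto_etaExp : Tendsto etaExp atTop atTop :=
  etaExp_mono.tendsto_atTop_atTop fun K => ⟨stageStart K, by
    rw [etaExp_of_rest le_rfl (stageStart_lt_plateauStart K)]; exact le_restExp K⟩

noncomputable def etaBlock (j : ℕ) : ℝ := ((2 : ℝ) ^ etaExp j)⁻¹

noncomputable def xiBlock (j : ℕ) : ℝ := ((2 : ℝ) ^ xiExp j)⁻¹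

noncomputable def eta : ℕ → ℝ := dyadicStep etaBlock

noncomputable def xi : ℕ → ℝ := dyadicStep xiBlock

lemma etaBlock_nonneg (j : ℕ) : 0 ≤ etaBlock j := by unfold etaBlock; positivity

lemma xiBlock_nonneg (j : ℕ) : 0 ≤ xiBlock j := by unfold xiBlock; positivity

lemma xiBlock_le_etaBlock (j : ℕ) : xiBlock j ≤ etaBlock j :=
  inv_anti₀ (by positivity) (pow_le_pow_right₀ one_le_two (etaExp_le_xiExp j))

lemma isC0Star_eta : IsC0Star eta :=
  isC0Star_dyadicStep etaBlock_nonneg (antitone_inv_two_pow etaExp_mono)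
    (tendsto_inv_two_pow tendsto_etaExp)

lemma isC0Star_xi : IsC0Star xi :=
  isC0Star_dyadicStep xiBlock_nonneg (antitone_inv_two_pow xiExp_mono)
    (tendsto_inv_two_pow (tendsto_atTop_mono etaExp_le_xiExp tendsto_etaExp))

local notation "Sη" => blockSum etaBlock
local notation "Sξ" => blockSum xiBlock

lemma eta_rest_le (K : ℕ) : Sη (plateauStart K) ≤ Sη (stageStart K) + 2 ^ massExp (K + 1) :=
  blockSum_le_add_of_eqOn_Ico (stageStart_lt_plateauStart K).le
    (fun _ hj => by rw [etaBlock, etaExp_of_rest (mem_Ico.1 hj).1 (mem_Ico.1 hj).2]) rfl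

lemma xi_rest_ge (K : ℕ) :
    Sξ (stageStart K) + 2 ^ massExp (K + 1) / 2 ≤ Sξ (plateauStart K) :=
  add_le_blockSum_of_eqOn_Ico (stageStart_lt_plateauStart K)
    (fun _ hj => by rw [xiBlock, xiExp_of_rest (mem_Ico.1 hj).1 (mem_Ico.1 hj).2]) rfl

lemma eta_plateau_le (K : ℕ) : Sη (dipStart K) ≤ Sη (plateauStart K) + 2 ^ massExp (K + 1) :=
  blockSum_le_add_of_eqOn_Ico (plateauStart_le_dipStart K)
    (fun _ hj => by
      rw [etaBlock, etaExp_of_plateau (mem_Ico.1 hj).1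
        ((mem_Ico.1 hj).2.trans_le (dipStart_le_stageStart_succ K))]) rfl

lemma eta_dip_le (K : ℕ) :
    Sη (stageStart (K + 1)) ≤ Sη (dipStart K) + 2 ^ (massExp (K + 1) + K) :=
  blockSum_le_add_of_eqOn_Ico (dipStart_le_stageStart_succ K)
    (fun _ hj => by
      rw [etaBlock, etaExp_of_plateau ((plateauStart_le_dipStart K).trans (mem_Ico.1 hj).1)
        (mem_Ico.1 hj).2])
    (by rw [stageStart_succ, dipStart]; ring)

lemma eta_dip_ge {K : ℕ} (hK : 0 < K) :
    Sη (dipStart K) + 2 ^ (massExp (K + 1) + K) / 2 ≤ Sη (stageStart (K + 1)) :=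
  add_le_blockSum_of_eqOn_Ico (by rw [stageStart_succ]; omega)
    (fun _ hj => by
      rw [etaBlock, etaExp_of_plateau ((plateauStart_le_dipStart K).trans (mem_Ico.1 hj).1)
        (mem_Ico.1 hj).2])
    (by rw [stageStart_succ, dipStart]; ring)

lemma xi_dip_le (K : ℕ) : Sξ (stageStart (K + 1)) ≤ Sξ (dipStart K) + 2 ^ massExp (K + 1) :=
  blockSum_le_add_of_eqOn_Ico (dipStart_le_stageStart_succ K)
    (fun _ hj => by rw [xiBlock, xiExp_of_dip (mem_Ico.1 hj).1 (mem_Ico.1 hj).2]) rfl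

lemma eta_sub_xi_eq_stageStart {K j : ℕ} (h₁ : stageStart K ≤ j) (h₂ : j ≤ dipStart K) :
    Sη j - Sξ j = Sη (stageStart K) - Sξ (stageStart K) :=
  blockSum_sub_blockSum_eq_of_eqOn_Ico h₁ fun _ hi => by
    rw [etaBlock, xiBlock, etaExp_eq_xiExp (mem_Ico.1 hi).1 ((mem_Ico.1 hi).2.trans_le h₂)]

lemma eta_stageStart_le (K : ℕ) : Sη (stageStart K) ≤ 2 ^ massExp (K + 1) / 2 := by
  induction K with
  | zero => norm_num [stageStart, restExp, massExp, blockSum]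
  | succ K ih =>
    have h₁ := eta_rest_le K
    have h₂ := eta_plateau_le K
    have h₃ := eta_dip_le K
    have hM : (2 : ℝ) ^ massExp (K + 2) = 2 ^ massExp (K + 1) * 2 ^ K * 8 := by
      rw [show massExp (K + 2) = massExp (K + 1) + K + 3 from rfl, pow_add, pow_add]; norm_num
    rw [pow_add] at h₃
    rw [hM]
    have hK : (2 : ℝ) ^ massExp (K + 1) ≤ 2 ^ massExp (K + 1) * 2 ^ K :=
      le_mul_of_one_le_right (by positivity) (one_le_pow₀ one_le_two)
    have : (0 : ℝ) ≤ 2 ^ massExp (K + 1) * 2 ^ K := by positivity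
    linarith

lemma eta_le_two_mul_xi {K j : ℕ} (h₁ : plateauStart K ≤ j) (h₂ : j ≤ dipStart K) :
    Sη j ≤ 2 * Sξ j := by
  have := eta_sub_xi_eq_stageStart ((stageStart_lt_plateauStart K).le.trans h₁) h₂
  have := eta_stageStart_le K
  have := xi_rest_ge K
  have := blockSum_nonneg xiBlock_nonneg (stageStart K)
  have := blockSum_mono xiBlock_nonneg h₁
  linarith

lemma eta_plateauStart_le (K : ℕ) : Sη (plateauStart K) ≤ 2 * 2 ^ massExp (K + 1) := by
  have := eta_rest_le K
  have := eta_stageStart_le K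
  have : (0 : ℝ) ≤ 2 ^ massExp (K + 1) := by positivity
  linarith

lemma two_mul_add_three_mul_le_plateauLen (K : ℕ) :
    (2 * K + 3) * 2 ^ (K + 5) ≤ plateauLen K := by
  have : 2 * K + 3 ≤ 2 ^ (K + 3) := by
    have := Nat.lt_two_pow_self (n := K)
    rw [pow_add]
    omega
  calc (2 * K + 3) * 2 ^ (K + 5) ≤ 2 ^ (K + 3) * 2 ^ (K + 5) := Nat.mul_le_mul_right _ this
    _ = plateauLen K := by rw [plateauLen, ← pow_add]; ring_nf

lemma sum_Ico_eta_le_sum_Ico_xi {K J : ℕ} (hJ₁ : dipStart K ≤ J)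
    (hJ₂ : J ≤ plateauStart (K + 1)) :
    ∑ j ∈ Ico (dipStart K) J, Sη j ≤ ∑ j ∈ Ico (plateauStart K) (dipStart K), Sξ j := by
  set M : ℝ := 2 ^ massExp (K + 1)
  have hcard : J - dipStart K ≤ 2 * K + 3 := by
    rw [plateauStart_eq, stageStart_succ] at hJ₂; omega
  have hlen : dipStart K - plateauStart K = plateauLen K := by rw [dipStart_eq]; omega
  have hM : (2 : ℝ) ^ massExp (K + 1 + 1) = M * 2 ^ (K + 3) := by
    rw [show massExp (K + 1 + 1) = massExp (K + 1) + (K + 3) by simp only [massExp]; ring, pow_add]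
  have hη := eta_plateauStart_le (K + 1)
  have hξ := xi_rest_ge K
  have hξ₀ := blockSum_nonneg xiBlock_nonneg (stageStart K)
  calc ∑ j ∈ Ico (dipStart K) J, Sη j
      ≤ (J - dipStart K) • Sη (plateauStart (K + 1)) := by
        rw [← Nat.card_Ico]
        exact sum_le_card_nsmul _ _ _ fun j hj =>
          blockSum_mono etaBlock_nonneg ((mem_Ico.1 hj).2.le.trans hJ₂)
    _ ≤ ((2 * K + 3 : ℕ) : ℝ) * (2 * (M * 2 ^ (K + 3))) := by
        rw [nsmul_eq_mul]
        exact mul_le_mul (by exact_mod_cast hcard) (hM ▸ hη)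
          (blockSum_nonneg etaBlock_nonneg _) (Nat.cast_nonneg _)
    _ = ((2 * K + 3) * 2 ^ (K + 5) : ℕ) * (M / 2) := by push_cast; ring
    _ ≤ plateauLen K * (M / 2) := by gcongr; exact_mod_cast two_mul_add_three_mul_le_plateauLen K
    _ ≤ plateauLen K • Sξ (plateauStart K) := by rw [nsmul_eq_mul]; gcongr; linarith
    _ ≤ ∑ j ∈ Ico (plateauStart K) (dipStart K), Sξ j := by
        rw [← hlen, ← Nat.card_Ico]
        exact card_nsmul_le_sum _ _ _ fun j hj => blockSum_mono xiBlock_nonneg (mem_Ico.1 hj).1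

theorem sum_eta_le_three_mul_sum_xi (J : ℕ) :
    ∑ j ∈ range J, Sη j ≤ 3 * ∑ j ∈ range J, Sξ j := by
  suffices h : ∀ K, ∀ J ≤ plateauStart K,
      ∑ j ∈ range J, Sη j ≤ 3 * ∑ j ∈ range J, Sξ j from
    h J J (stageStart_strictMono.le_apply.trans (stageStart_lt_plateauStart J).le)
  intro K
  induction K with
  | zero =>
    intro J hJ
    have hstart : stageStart 0 = 0 := rfl
    have heq : ∀ j ∈ range J, Sη j = Sξ j := fun j hj => by
      have := eta_sub_xi_eq_stageStart (K := 0) (j := j) (by rw [hstart]; exact j.zero_le)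
        ((mem_range.1 hj).le.trans (hJ.trans (plateauStart_le_dipStart 0)))
      rw [hstart] at this
      simpa [blockSum, sub_eq_zero] using this
    rw [sum_congr rfl heq]
    linarith [sum_nonneg fun j (_ : j ∈ range J) => blockSum_nonneg xiBlock_nonneg j]
  | succ K ih =>
    intro J hJ
    rcases le_or_gt J (plateauStart K) with h | h
    · exact ih J h
    · have := sum_range_le_mul_sum_range_of_window_absorbed (c := 2) zero_le_two
        (blockSum_nonneg xiBlock_nonneg) (plateauStart_le_dipStart K) h.le
        (by linarith [ih _ le_rfl])
        (fun j hj => eta_le_two_mul_xi (mem_Ico.1 hj).1 (mem_Ico.1 hj).2.le)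
        (fun hs => sum_Ico_eta_le_sum_Ico_xi hs hJ)
      linarith

lemma exists_mul_xi_lt_eta (C : ℝ) (hC : 0 < C) :
    ∃ p, 0 < p ∧ C * Sξ p < Sη p := by
  obtain ⟨K, hK⟩ := pow_unbounded_of_one_lt (8 * C) one_lt_two
  refine ⟨stageStart (K + 1 + 1),
    (Nat.zero_le _).trans_lt (stageStart_strictMono K.succ.succ_pos), ?_⟩
  have hη := eta_dip_ge (K := K + 1) K.succ_pos
  have hξ := xi_dip_le (K + 1)
  have hξη := blockSum_le_blockSum xiBlock_le_etaBlock (dipStart (K + 1))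
  have h₁ := eta_plateau_le (K + 1)
  have h₂ := eta_plateauStart_le (K + 1)
  have h₃ := blockSum_nonneg etaBlock_nonneg (dipStart (K + 1))
  rw [pow_add, pow_succ] at hη
  set M : ℝ := 2 ^ massExp (K + 1 + 1)
  have hM : 0 < M := by positivity
  have h₄ : C * Sξ (stageStart (K + 1 + 1)) ≤ C * (4 * M) := by gcongr; linarith
  have h₅ : 8 * C * M < 2 ^ K * M := mul_lt_mul_of_pos_right hK hM
  have h₆ : 0 < C * M := mul_pos hC hM
  linarith

end Wodzicki

/-- There are `ξ ≤ η` in `c₀*` with `η_{a²} = O(ξ_{a²})` (hence `ξ_{a²} ≍ η_{a²}`)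
but `η_a ≠ O(ξ_a)`: second-order equality of arithmetic means does not cancel. -/
theorem stmt_9 :
    ∃ ξ η : ℕ → ℝ, IsC0Star ξ ∧ IsC0Star η ∧ (∀ n, ξ n ≤ η n) ∧
      BigO (am (am η)) (am (am ξ)) ∧ ¬ BigO (am η) (am ξ) :=
  ⟨Wodzicki.xi, Wodzicki.eta, Wodzicki.isC0Star_xi, Wodzicki.isC0Star_eta,
    fun _ => Wodzicki.xiBlock_le_etaBlock _,
    bigO_am_am_dyadicStep three_pos Wodzicki.xiBlock_nonneg
      (antitone_inv_two_pow Wodzicki.xiExp_mono) Wodzicki.etaBlock_nonneg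
      Wodzicki.sum_eta_le_three_mul_sum_xi,
    not_bigO_am_dyadicStep Wodzicki.exists_mul_xi_lt_eta⟩
end

section
/- Let η ∈ c₀* with η₁ > 0, and suppose the ratio of regularity r(η_a)_n := (η_{a²})_n/(η_a)_n is equivalent to a monotone sequence, i.e., there exist a monotone (nondecreasing or nonincreasing) sequence β : {1,2,...} → ℝ and constants c, C > 0 with c·β_n ≤ (η_{a²})_n/(η_a)_n ≤ C·β_n for all n. Then for every ξ ∈ c₀*: ξ_{a²} = O(η_{a²}) implies ξ_a = O(η_a). (This is the second-order inclusion cancellation J_{a²} ⊂ I_{a²} ⟹ J_a ⊂ I_a for I the principal ideal (η).) -/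
/-!
Write `T_N = ∑_{j ≤ N} (η_a)_j = (N+1)(η_{a²})_N`, so that the ratio of regularity is
`r_N = T_N / ((N+1)(η_a)_N) ≥ 1`. If `β` is nonincreasing, `r` is bounded and
`ξ_a ≤ ξ_{a²} = O(η_{a²}) = O(η_a)`. If `β` is nondecreasing, so is `q = max (c β) 1 ≍ r`.
Then `∑_{j ≤ N} (ξ_a)_j ≥ (n+1)(ξ_a)_n (1 + ∑_{n < j ≤ N} 1/(j+1))`, while `r_m ≥ q_n` for
`m ≥ n` makes `T` grow slowly: `T_{m+1} ≤ T_m (1 + 2/(q_n (m+2)))`, hence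
`T_N ≤ T_n exp ((2/q_n) ∑_{n < j ≤ N} 1/(j+1))`. Stopping `N` when the harmonic tail reaches
`q_n - 1` and comparing the two estimates through `∑_{j ≤ N} (ξ_a)_j ≤ K T_N` gives
`(ξ_a)_n ≤ K (C/c) e² (η_a)_n`.
-/

open Finset Filter Real

theorem BigO.trans {f g h : ℕ → ℝ} (hfg : BigO f g) (hgh : BigO g h) : BigO f h := by
  obtain ⟨C, hC, hfg⟩ := hfg
  obtain ⟨D, hD, hgh⟩ := hgh
  exact ⟨C * D, by positivity, fun n => (hfg n).trans <| by
    rw [mul_assoc]; exact mul_le_mul_of_nonneg_left (hgh n) hC.le⟩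

section ArithmeticMean

variable {ξ : ℕ → ℝ}

theorem sum_range_succ_eq_mul_am (ξ : ℕ → ℝ) (n : ℕ) :
    ∑ j ∈ range (n + 1), ξ j = ((n : ℝ) + 1) * am ξ n := by
  rw [am]; field_simp

theorem am_zero (ξ : ℕ → ℝ) : am ξ 0 = ξ 0 := by
  simp [am]

theorem am_pos (h0 : ∀ n, 0 ≤ ξ n) (hpos : 0 < ξ 0) (n : ℕ) : 0 < am ξ n :=
  div_pos (sum_pos' (fun i _ => h0 i) ⟨0, by simp, hpos⟩) (by positivity)

theorem Antitone.mul_le_sum_range (h : Antitone ξ) (n : ℕ) :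
    ((n : ℝ) + 1) * ξ n ≤ ∑ j ∈ range (n + 1), ξ j := by
  simpa [nsmul_eq_mul, add_comm] using
    card_nsmul_le_sum (range (n + 1)) ξ (ξ n) fun i hi => h (mem_range_succ_iff.mp hi)

theorem Antitone.le_am (h : Antitone ξ) (n : ℕ) : ξ n ≤ am ξ n := by
  have := h.mul_le_sum_range n
  rw [sum_range_succ_eq_mul_am] at this
  exact le_of_mul_le_mul_left this (by positivity)

theorem Antitone.bigO_am (h : Antitone ξ) : BigO ξ (am ξ) :=
  ⟨1, one_pos, fun n => by simpa using h.le_am n⟩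

theorem antitone_am (h : Antitone ξ) : Antitone (am ξ) := by
  refine antitone_nat_of_succ_le fun n => ?_
  have hsum := sum_range_succ_eq_mul_am ξ (n + 1)
  rw [sum_range_succ, sum_range_succ_eq_mul_am] at hsum
  have := (h n.le_succ).trans (h.le_am n)
  push_cast at hsum
  nlinarith

end ArithmeticMean

theorem le_mul_exp_sum_of_le_mul_one_add {u a : ℕ → ℝ} (hu : ∀ k, 0 ≤ u k)
    (hstep : ∀ k, u (k + 1) ≤ u k * (1 + a k)) (k : ℕ) :
    u k ≤ u 0 * exp (∑ i ∈ range k, a i) := by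
  induction k with
  | zero => simp
  | succ k ih =>
    calc u (k + 1) ≤ u k * (1 + a k) := hstep k
      _ ≤ u k * exp (a k) := by
          gcongr
          · exact hu k
          · linarith [add_one_le_exp (a k)]
      _ ≤ u 0 * exp (∑ i ∈ range k, a i) * exp (a k) := by gcongr
      _ = u 0 * exp (∑ i ∈ range (k + 1), a i) := by rw [sum_range_succ, exp_add, mul_assoc]

theorem exists_le_and_le_add_one {u : ℕ → ℝ} (hu : Tendsto u atTop atTop)
    (hstep : ∀ k, u (k + 1) ≤ u k + 1) {x : ℝ} (h0 : u 0 ≤ x + 1) :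
    ∃ k, x ≤ u k ∧ u k ≤ x + 1 := by
  classical
  have hex : ∃ k, x ≤ u k := (hu.eventually_ge_atTop x).exists
  refine ⟨Nat.find hex, Nat.find_spec hex, ?_⟩
  rcases hk : Nat.find hex with _ | k
  · exact h0
  · have : ¬ x ≤ u k := Nat.find_min hex (by omega)
    linarith [hstep k]

theorem tendsto_sum_range_one_div_add_two_atTop (n : ℕ) :
    Tendsto (fun k => ∑ i ∈ range k, 1 / ((n : ℝ) + i + 2)) atTop atTop := by
  refine (not_summable_iff_tendsto_nat_atTop_of_nonneg fun i => by positivity).mp ?_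
  have : (fun i : ℕ => 1 / ((n : ℝ) + i + 2)) = fun i => 1 / ((i + (n + 2) : ℕ) : ℝ) := by
    ext i; push_cast; ring_nf
  rw [this, summable_nat_add_iff (f := fun i : ℕ => 1 / (i : ℝ)) (n + 2)]
  exact Real.not_summable_one_div_natCast

theorem sum_range_mul_one_add_le_sum_am {ξ : ℕ → ℝ} (hξ0 : ∀ n, 0 ≤ ξ n) (hξ : Antitone ξ)
    (n k : ℕ) :
    (∑ j ∈ range (n + 1), ξ j) * (1 + ∑ i ∈ range k, 1 / ((n : ℝ) + i + 2))
      ≤ ∑ j ∈ range (n + k + 1), am ξ j := by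
  induction k with
  | zero =>
    simpa [sum_range_succ_eq_mul_am ξ] using (antitone_am hξ).mul_le_sum_range n
  | succ k ih =>
    have hpartial : ∑ j ∈ range (n + 1), ξ j ≤ ∑ j ∈ range (n + k + 1 + 1), ξ j :=
      sum_le_sum_of_subset_of_nonneg (range_subset_range.mpr (by omega)) fun i _ _ => hξ0 i
    rw [sum_range_succ _ k, ← add_assoc, mul_add, ← add_assoc n k 1, sum_range_succ _ (n + k + 1)]
    refine add_le_add ih ?_
    rw [am, mul_one_div]
    gcongr ?_ / ?_
    · exact sum_nonneg fun i _ => hξ0 i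
    · push_cast; linarith

theorem add_le_mul_one_add_two_div {T x p : ℝ} (hx : 0 ≤ x) (hp : 2 ≤ p) (h : p * x ≤ T + x) :
    T + x ≤ T * (1 + 2 / p) := by
  have hpx : p * x ≤ 2 * T := by nlinarith
  have : x ≤ T * (2 / p) := by
    rw [mul_div_assoc', le_div_iff₀ (by linarith)]; linarith
  linarith

theorem sum_range_le_mul_exp {τ : ℕ → ℝ} (hτ : ∀ n, 0 ≤ τ n) {q : ℝ} (hq : 1 ≤ q) {n : ℕ}
    (h : ∀ m, n < m → q * (((m : ℝ) + 1) * τ m) ≤ ∑ j ∈ range (m + 1), τ j) (k : ℕ) :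
    ∑ j ∈ range (n + k + 1), τ j
      ≤ (∑ j ∈ range (n + 1), τ j) * exp (2 / q * ∑ i ∈ range k, 1 / ((n : ℝ) + i + 2)) := by
  rw [mul_sum]
  refine le_mul_exp_sum_of_le_mul_one_add (u := fun k => ∑ j ∈ range (n + k + 1), τ j)
    (fun k => sum_nonneg fun j _ => hτ j) (fun k => ?_) k
  have hstep := h (n + k + 1) (by omega)
  rw [sum_range_succ _ (n + k + 1)] at hstep
  rw [← add_assoc n k 1, sum_range_succ _ (n + k + 1), mul_one_div, div_div]
  apply add_le_mul_one_add_two_div (hτ _) (by nlinarith)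
  push_cast at hstep ⊢
  linarith

theorem am_le_of_am_am_le_of_monotone_ratio {ξ τ q : ℕ → ℝ} {D K : ℝ}
    (hξ0 : ∀ n, 0 ≤ ξ n) (hξ : Antitone ξ)
    (hτ : ∀ n, 0 ≤ τ n) (hq : Monotone q) (hq1 : ∀ n, 1 ≤ q n)
    (hlow : ∀ n, q n * τ n ≤ am τ n) (hup : ∀ n, am τ n ≤ D * q n * τ n)
    (hK0 : 0 ≤ K) (hK : ∀ n, am (am ξ) n ≤ K * am τ n) (n : ℕ) :
    am ξ n ≤ K * D * exp 2 * τ n := by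
  set H : ℕ → ℝ := fun k => ∑ i ∈ range k, 1 / ((n : ℝ) + i + 2) with hH
  -- With `1 + H k ≈ q n`, the factor `q n` in `hup` is absorbed by the harmonic gain `1 + H k`,
  -- while the growth factor `exp (2 H k / q n)` of the partial sums of `τ` stays below `e²`.
  obtain ⟨k, hqH, hHq⟩ := exists_le_and_le_add_one (u := fun k => 1 + H k)
    (tendsto_atTop_add_const_left _ 1 (tendsto_sum_range_one_div_add_two_atTop n))
    (fun k => by
      have : 1 / ((n : ℝ) + k + 2) ≤ 1 := by rw [div_le_one (by positivity)]; linarith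
      simp only [hH, sum_range_succ]; linarith)
    (x := q n) (by simp only [hH, sum_range_zero]; linarith [hq1 n])
  have hH0 : 0 < 1 + H k := by linarith [hq1 n]
  have hgrowth := sum_range_le_mul_exp hτ (hq1 n) (n := n) (fun m hm => by
    rw [sum_range_succ_eq_mul_am, ← mul_left_comm]
    exact mul_le_mul_of_nonneg_left
      ((mul_le_mul_of_nonneg_right (hq hm.le) (hτ m)).trans (hlow m)) (by positivity)) k
  have hexp : exp (2 / q n * H k) ≤ exp 2 := by
    refine exp_le_exp.mpr ?_
    rw [div_mul_eq_mul_div, div_le_iff₀ (by linarith [hq1 n])]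
    linarith
  have hDτ : 0 ≤ D * τ n := by
    nlinarith [hup n, hlow n, hq1 n, hτ n]
  have hchain : ((n : ℝ) + 1) * (1 + H k) * am ξ n
      ≤ ((n : ℝ) + 1) * (1 + H k) * (K * D * exp 2 * τ n) :=
    calc ((n : ℝ) + 1) * (1 + H k) * am ξ n
        = ((n : ℝ) + 1) * am ξ n * (1 + H k) := by ring
      _ ≤ ∑ j ∈ range (n + k + 1), am ξ j := by
          rw [← sum_range_succ_eq_mul_am]; exact sum_range_mul_one_add_le_sum_am hξ0 hξ n k
      _ ≤ K * ∑ j ∈ range (n + k + 1), τ j := by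
          rw [sum_range_succ_eq_mul_am, sum_range_succ_eq_mul_am, mul_left_comm]
          exact mul_le_mul_of_nonneg_left (hK _) (by positivity)
      _ ≤ K * ((∑ j ∈ range (n + 1), τ j) * exp 2) :=
          mul_le_mul_of_nonneg_left
            (hgrowth.trans (mul_le_mul_of_nonneg_left hexp (sum_nonneg fun j _ => hτ j))) hK0
      _ ≤ K * (((n : ℝ) + 1) * (D * q n * τ n) * exp 2) := by
          rw [sum_range_succ_eq_mul_am]; gcongr; exact hup n
      _ ≤ ((n : ℝ) + 1) * (1 + H k) * (K * D * exp 2 * τ n) := by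
          have : D * q n * τ n ≤ D * τ n * (1 + H k) := by
            rw [mul_right_comm]; exact mul_le_mul_of_nonneg_left hqH hDτ
          calc K * (((n : ℝ) + 1) * (D * q n * τ n) * exp 2)
              ≤ K * (((n : ℝ) + 1) * (D * τ n * (1 + H k)) * exp 2) := by gcongr
            _ = _ := by ring
  exact le_of_mul_le_mul_left hchain (by positivity)

section RatioOfRegularity

variable {τ β : ℕ → ℝ} {c C : ℝ}

theorem bigO_am_of_ratio_le_antitone (hτ : ∀ n, 0 < τ n) (hβ : Antitone β)
    (hc : 0 < c) (hC : 0 < C)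
    (hr : ∀ n, c * β n ≤ am τ n / τ n ∧ am τ n / τ n ≤ C * β n) : BigO (am τ) τ := by
  have hβ0 : c * β 0 ≤ 1 := by simpa [am_zero, div_self (hτ 0).ne'] using (hr 0).1
  refine ⟨C / c, by positivity, fun n => ?_⟩
  rw [← div_le_iff₀ (hτ n)]
  calc am τ n / τ n ≤ C * β n := (hr n).2
    _ ≤ C * β 0 := mul_le_mul_of_nonneg_left (hβ n.zero_le) hC.le
    _ ≤ C / c := by rw [le_div_iff₀ hc]; nlinarith

theorem exists_monotone_ratio_bounds (hτ : ∀ n, 0 < τ n) (hτa : Antitone τ) (hβ : Monotone β)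
    (hc : 0 < c) (hC : 0 < C) (hr : ∀ n, c * β n ≤ am τ n / τ n ∧ am τ n / τ n ≤ C * β n) :
    ∃ q : ℕ → ℝ, Monotone q ∧ (∀ n, 1 ≤ q n) ∧
      (∀ n, q n * τ n ≤ am τ n) ∧ ∀ n, am τ n ≤ C / c * q n * τ n := by
  refine ⟨fun n => max (c * β n) 1, fun m n hmn => ?_, fun n => le_max_right _ _,
    fun n => ?_, fun n => ?_⟩
  · exact max_le_max (mul_le_mul_of_nonneg_left (hβ hmn) hc.le) le_rfl
  · rw [← le_div_iff₀ (hτ n)]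
    exact max_le (hr n).1 ((one_le_div (hτ n)).mpr (hτa.le_am n))
  · calc am τ n = am τ n / τ n * τ n := (div_mul_cancel₀ _ (hτ n).ne').symm
      _ ≤ C / c * (c * β n) * τ n := by
          rw [← mul_assoc, div_mul_cancel₀ _ hc.ne']
          exact mul_le_mul_of_nonneg_right (hr n).2 (hτ n).le
      _ ≤ C / c * max (c * β n) 1 * τ n := by
          gcongr
          · exact (hτ n).le
          · exact le_max_left _ _

end RatioOfRegularity

/-- If the ratio of regularity `r(η_a)_n = (η_{a²})_n/(η_a)_n` is equivalent to a
monotone sequence, then `ξ_{a²} = O(η_{a²})` implies `ξ_a = O(η_a)`. -/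
theorem stmt_10 (η : ℕ → ℝ) (hη : IsC0Star η) (hpos : 0 < η 0)
    (hmon : ∃ β : ℕ → ℝ, (Monotone β ∨ Antitone β) ∧ ∃ c C : ℝ, 0 < c ∧ 0 < C ∧
      ∀ n, c * β n ≤ am (am η) n / am η n ∧ am (am η) n / am η n ≤ C * β n) :
    ∀ ξ : ℕ → ℝ, IsC0Star ξ → BigO (am (am ξ)) (am (am η)) → BigO (am ξ) (am η) := by
  obtain ⟨β, hβ, c, C, hc, hC, hr⟩ := hmon
  obtain ⟨hη0, hη, -⟩ := hη
  have hτpos : ∀ n, 0 < am η n := am_pos hη0 hpos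
  have hτ : Antitone (am η) := antitone_am (antitone_nat_of_succ_le hη)
  rintro ξ ⟨hξ0, hξ, -⟩ hξη
  replace hξ : Antitone ξ := antitone_nat_of_succ_le hξ
  rcases hβ with hβ | hβ
  · obtain ⟨q, hq, hq1, hlow, hup⟩ := exists_monotone_ratio_bounds hτpos hτ hβ hc hC hr
    obtain ⟨K, hK, hξη⟩ := hξη
    exact ⟨K * (C / c) * exp 2, by positivity,
      am_le_of_am_am_le_of_monotone_ratio hξ0 hξ (fun n => (hτpos n).le) hq hq1 hlow hup hK.le hξη⟩
  · exact (antitone_am hξ).bigO_am.trans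
      (hξη.trans (bigO_am_of_ratio_le_antitone hτpos hβ hc hC hr))
end
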